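/- arXiv:1607.02497 — 9 statements merged into one kernel-verified Lean document; each statement's English description precedes it below -/
import Mathlib

section
/- Let (Ω, ℱ, ℙ) be a probability space, n ≥ 1, and let 𝔈_1, …, 𝔈_N be independent, identically distributed random n×n real matrices whose entries have finite second moments. Then E[ ‖𝔈_N ⋯ 𝔈_1‖_F² ] = vec(I) ⬝ ( E[𝔈_1 ⊗ 𝔈_1] )^N · vec(I), where vec(I) ∈ ℝ^{n²} is the vector indexed by pairs (i,p) with entry 1 if i = p and 0 otherwise. -/
open MeasureTheory ProbabilityTheory Matrix Filter
open scoped Kronecker ENNReal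

/-- The Borel/pi measurable space structure on matrices. -/
instance matrixMeasurableSpace {m n α : Type*} [MeasurableSpace α] :
    MeasurableSpace (Matrix m n α) :=
  inferInstanceAs (MeasurableSpace (m → n → α))

/-- The Frobenius norm of a real matrix. -/
noncomputable def frobNorm {m n : Type*} [Fintype m] [Fintype n]
    (M : Matrix m n ℝ) : ℝ :=
  Real.sqrt (∑ i, ∑ j, (M i j) ^ 2)

/-- Entrywise expectation of a random matrix. -/
noncomputable def matExp {Ω : Type*} [MeasurableSpace Ω] (μ : Measure Ω)
    {m n : Type*} (f : Ω → Matrix m n ℝ) : Matrix m n ℝ :=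
  Matrix.of fun i j => ∫ ω, f ω i j ∂μ

/-- The vectorization `vec(I) ∈ ℝ^{n²}` of the identity matrix: the vector indexed by
pairs `(i,p)` with entry `1` if `i = p` and `0` otherwise. -/
def vecId (n : ℕ) : Fin n × Fin n → ℝ :=
  fun ip => if ip.1 = ip.2 then 1 else 0

-- auxiliary lemmas

lemma integrable_mul_of_sq {Ω : Type*} [MeasurableSpace Ω] {μ : Measure Ω}
    (f g : Ω → ℝ) (hf : Measurable f) (hg : Measurable g)
    (hf2 : Integrable (fun ω => f ω ^ 2) μ) (hg2 : Integrable (fun ω => g ω ^ 2) μ) :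
    Integrable (fun ω => f ω * g ω) μ := by
  refine Integrable.mono' (((hf2.add hg2)).div_const 2)
    ((hf.mul hg).aestronglyMeasurable) ?_
  filter_upwards with ω
  simp only [Pi.add_apply]
  rw [Real.norm_eq_abs, abs_mul]
  nlinarith [sq_nonneg (|f ω| - |g ω|), sq_abs (f ω), sq_abs (g ω), abs_nonneg (f ω), abs_nonneg (g ω)]

lemma list_prod_kronecker {ι : Type*} {n : ℕ} (l : List ι) (f : ι → Matrix (Fin n) (Fin n) ℝ) :
    (l.map f).prod ⊗ₖ (l.map f).prod = (l.map fun k => f k ⊗ₖ f k).prod := by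
  induction l with
  | nil => simpa using Matrix.one_kronecker_one
  | cons k l ih => simp [Matrix.mul_kronecker_mul, ← ih]

lemma measurable_list_prod_entry {α ι m : Type*} [MeasurableSpace α] [Fintype m] [DecidableEq m]
    (l : List ι) (f : ι → α → Matrix m m ℝ) (hf : ∀ i a b, Measurable fun x => f i x a b)
    (a b : m) : Measurable fun x => ((l.map fun k => f k x).prod) a b := by
  induction l generalizing a b with
  | nil => simp only [List.map_nil, List.prod_nil, Matrix.one_apply]; exact measurable_const
  | cons k l ih =>
    simp only [List.map_cons, List.prod_cons, Matrix.mul_apply]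
    exact Finset.measurable_sum _ fun c _ => (hf k a c).mul (ih c b)


/-- The expected squared Frobenius norm of a product `𝔈_N ⋯ 𝔈_1` of i.i.d. random
matrices equals `vec(I) ⬝ (E[𝔈₁ ⊗ 𝔈₁])^N vec(I)`. -/
theorem expected_sq_frobenius_of_product
    {Ω : Type*} [MeasurableSpace Ω] (μ : Measure Ω) [IsProbabilityMeasure μ]
    (n N : ℕ) (hn : 1 ≤ n) (hN : 1 ≤ N)
    (E : Fin N → Ω → Matrix (Fin n) (Fin n) ℝ)
    (hmeas : ∀ k, Measurable (E k))
    (hindep : iIndepFun E μ)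
    (hident : ∀ k, IdentDistrib (E k) (E ⟨0, hN⟩) μ μ)
    (hL2 : ∀ k i j, Integrable (fun ω => (E k ω i j) ^ 2) μ) :
    (∫ ω, frobNorm (((List.finRange N).reverse.map fun k => E k ω).prod) ^ 2 ∂μ)
      = vecId n ⬝ᵥ
          ((matExp μ fun ω => (E ⟨0, hN⟩ ω) ⊗ₖ (E ⟨0, hN⟩ ω)) ^ N *ᵥ vecId n) := by
  classical
  set k0 : Fin N := ⟨0, hN⟩ with hk0
  set F : Fin N → Ω → Matrix (Fin n × Fin n) (Fin n × Fin n) ℝ :=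
    fun k ω => (E k ω) ⊗ₖ (E k ω) with hF
  have hEentry : ∀ k (i j : Fin n), Measurable fun ω => E k ω i j := fun k i j =>
    (measurable_pi_apply j).comp ((measurable_pi_apply i).comp (hmeas k))
  have hFentry : ∀ k a b, Measurable fun ω => F k ω a b := by
    intro k a b
    simpa [hF, Matrix.kroneckerMap_apply, Pi.mul_def] using
      (hEentry k a.1 b.1).mul (hEentry k a.2 b.2)
  have hFint : ∀ k a b, Integrable (fun ω => F k ω a b) μ := by
    intro k a b
    simpa [hF, Matrix.kroneckerMap_apply] using
      integrable_mul_of_sq _ _ (hEentry k a.1 b.1) (hEentry k a.2 b.2)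
        (hL2 k a.1 b.1) (hL2 k a.2 b.2)
  -- independence of one factor from the rest
  have hsplit : ∀ (k : Fin N) (l : List (Fin N)), k ∉ l → ∀ a c b,
      IndepFun (fun ω => F k ω a c) (fun ω => ((l.map fun j => F j ω).prod) c b) μ := by
    intro k l hkl a c b
    have hdisj : Disjoint ({k} : Finset (Fin N)) l.toFinset := by
      simp [Finset.disjoint_singleton_left, List.mem_toFinset, hkl]
    have hbase := hindep.indepFun_finset {k} l.toFinset hdisj hmeas
    have hkmem : k ∈ ({k} : Finset (Fin N)) := Finset.mem_singleton_self k
    have hφm : Measurable (fun x : {j : Fin N // j ∈ ({k} : Finset (Fin N))} →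
        Matrix (Fin n) (Fin n) ℝ => ((x ⟨k, hkmem⟩) ⊗ₖ (x ⟨k, hkmem⟩)) a c) := by
      simp only [Matrix.kroneckerMap_apply]
      fun_prop
    have hψm : Measurable (fun x : {j : Fin N // j ∈ l.toFinset} → Matrix (Fin n) (Fin n) ℝ =>
        ((l.map fun j => if h : j ∈ l.toFinset then (x ⟨j, h⟩) ⊗ₖ (x ⟨j, h⟩) else 0).prod) c b) := by
      refine measurable_list_prod_entry l
        (fun j (x : {j : Fin N // j ∈ l.toFinset} → Matrix (Fin n) (Fin n) ℝ) =>
          if h : j ∈ l.toFinset then (x ⟨j, h⟩) ⊗ₖ (x ⟨j, h⟩) else 0) ?_ c b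
      intro j a b
      by_cases h : j ∈ l.toFinset
      · simp only [h, dif_pos, Matrix.kroneckerMap_apply]
        fun_prop
      · simp only [h, dif_neg, not_false_iff]
        exact measurable_const
    have hcomp := hbase.comp hφm hψm
    refine hcomp.congr (Filter.Eventually.of_forall fun ω => ?_)
      (Filter.Eventually.of_forall fun ω => ?_)
    · simp [hF, Function.comp]
    · simp only [Function.comp]
      have heq : (l.map fun j =>
          if h : j ∈ l.toFinset then (E j ω) ⊗ₖ (E j ω) else 0) = l.map fun j => F j ω :=
        List.map_congr_left fun j hj => by rw [dif_pos (List.mem_toFinset.2 hj)]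
      rw [heq]
  -- key induction
  have key : ∀ l : List (Fin N), l.Nodup →
      (∀ a b, Integrable (fun ω => ((l.map fun k => F k ω).prod) a b) μ) ∧
      (∀ a b, ∫ ω, ((l.map fun k => F k ω).prod) a b ∂μ
          = ((l.map fun k => matExp μ (F k)).prod) a b) := by
    intro l
    induction l with
    | nil =>
      intro _
      constructor
      · intro a b
        simp only [List.map_nil, List.prod_nil]
        exact integrable_const _
      · intro a b
        simp only [List.map_nil, List.prod_nil]
        simp [integral_const]
    | cons k l ih =>
      intro hnd
      have hkl : k ∉ l := (List.nodup_cons.1 hnd).1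
      obtain ⟨ihint, ihval⟩ := ih (List.nodup_cons.1 hnd).2
      have hterm : ∀ a b (c : Fin n × Fin n),
          Integrable (fun ω => F k ω a c * ((l.map fun j => F j ω).prod) c b) μ := by
        intro a b c
        exact (hsplit k l hkl a c b).integrable_mul (hFint k a c) (ihint c b)
      constructor
      · intro a b
        simp only [List.map_cons, List.prod_cons, Matrix.mul_apply]
        exact integrable_finset_sum _ fun c _ => hterm a b c
      · intro a b
        simp only [List.map_cons, List.prod_cons, Matrix.mul_apply]
        rw [integral_finset_sum _ fun c _ => hterm a b c]
        refine Finset.sum_congr rfl fun c _ => ?_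
        have h2 : (∫ ω, F k ω a c * ((l.map fun j => F j ω).prod) c b ∂μ)
            = (∫ ω, F k ω a c ∂μ) * ∫ ω, ((l.map fun j => F j ω).prod) c b ∂μ :=
          IndepFun.integral_fun_mul_eq_mul_integral (hsplit k l hkl a c b)
            (hFint k a c).aestronglyMeasurable (ihint c b).aestronglyMeasurable
        rw [h2, ihval c b]
        rfl
  -- all expectations equal
  have hsame : ∀ k, matExp μ (F k) = matExp μ (F k0) := by
    intro k
    ext a b
    have hg : Measurable fun M : Matrix (Fin n) (Fin n) ℝ => M a.1 b.1 * M a.2 b.2 :=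
      Measurable.mul (f := fun M : Matrix (Fin n) (Fin n) ℝ => M a.1 b.1)
        (g := fun M : Matrix (Fin n) (Fin n) ℝ => M a.2 b.2)
        ((measurable_pi_apply _).comp (measurable_pi_apply _))
        ((measurable_pi_apply _).comp (measurable_pi_apply _))
    have := ((hident k).comp hg).integral_eq
    simpa [matExp, hF, Matrix.kroneckerMap_apply, Function.comp] using this
  set l : List (Fin N) := (List.finRange N).reverse with hl
  have hlnd : l.Nodup := List.nodup_reverse.2 (List.nodup_finRange N)
  obtain ⟨hint, hval⟩ := key l hlnd
  have hprodexp : (l.map fun k => matExp μ (F k)).prod = (matExp μ (F k0)) ^ N := by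
    have h1 : (l.map fun k => matExp μ (F k)) = l.map fun _ => matExp μ (F k0) := by
      apply List.map_congr_left; intro k _; exact hsame k
    rw [h1, List.map_const', List.prod_replicate]
    congr 1
    simp [hl]
  -- rewrite the integrand
  have hfrob : ∀ ω, frobNorm (((List.finRange N).reverse.map fun k => E k ω).prod) ^ 2
      = ∑ i : Fin n, ∑ j : Fin n, ((l.map fun k => F k ω).prod) (i, i) (j, j) := by
    intro ω
    rw [frobNorm, Real.sq_sqrt (by positivity)]
    refine Finset.sum_congr rfl fun i _ => Finset.sum_congr rfl fun j _ => ?_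
    have hk := list_prod_kronecker l (fun k => E k ω)
    have := congrFun (congrFun hk (i, i)) (j, j)
    simp only [Matrix.kroneckerMap_apply] at this
    rw [sq]
    rw [this]
  calc (∫ ω, frobNorm (((List.finRange N).reverse.map fun k => E k ω).prod) ^ 2 ∂μ)
      = ∫ ω, ∑ i : Fin n, ∑ j : Fin n, ((l.map fun k => F k ω).prod) (i, i) (j, j) ∂μ := by
        exact integral_congr_ae (Filter.Eventually.of_forall fun ω => hfrob ω)
    _ = ∑ i : Fin n, ∑ j : Fin n, ∫ ω, ((l.map fun k => F k ω).prod) (i, i) (j, j) ∂μ := by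
        rw [integral_finset_sum _ fun i _ => integrable_finset_sum _ fun j _ => hint (i,i) (j,j)]
        exact Finset.sum_congr rfl fun i _ =>
          integral_finset_sum _ fun j _ => hint (i, i) (j, j)
    _ = ∑ i : Fin n, ∑ j : Fin n, ((matExp μ (F k0)) ^ N) (i, i) (j, j) := by
        refine Finset.sum_congr rfl fun i _ => Finset.sum_congr rfl fun j _ => ?_
        rw [hval (i, i) (j, j), hprodexp]
    _ = vecId n ⬝ᵥ ((matExp μ fun ω => (E ⟨0, hN⟩ ω) ⊗ₖ (E ⟨0, hN⟩ ω)) ^ N *ᵥ vecId n) := by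
        simp [vecId, dotProduct, Matrix.mulVec, Fintype.sum_prod_type, mul_ite, ite_mul,
          mul_one, mul_zero, one_mul, zero_mul, hF, hk0]
end

section
/- Let n ≥ 1, B an n×n real matrix, q ∈ [0,1], and let X = diag(χ_1, …, χ_n) be a random diagonal matrix whose diagonal entries χ_i are mutually independent random variables with ℙ(χ_i = 1) = 1 − q and ℙ(χ_i = 0) = q. Then E[ (I − X·B) ⊗ (I − X·B) ] = (I − (1−q)·B) ⊗ (I − (1−q)·B) + q(1−q) · K · (B ⊗ B), where K is the n²×n² diagonal 0–1 matrix defined by K_{(i,p),(i,p)} = 1 if i = p and all other entries 0. -/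
open MeasureTheory Matrix Filter
open scoped Kronecker ENNReal

/-- The `n²×n²` diagonal 0–1 matrix `K`, indexed by pairs `(i,p)`, with diagonal entry
`1` at position `(i,p)` if `i = p` and `0` otherwise. -/
def kdiag (n : Type*) [DecidableEq n] : Matrix (n × n) (n × n) ℝ :=
  Matrix.diagonal fun ip => if ip.1 = ip.2 then 1 else 0

/-- The expected Kronecker square of the fault-prone iteration matrix `I − X·B`, where
`X = diag(χ_1,…,χ_n)` has mutually independent Bernoulli(1−q) diagonal entries:
`E[(I − X·B) ⊗ (I − X·B)] = (I − (1−q)B)^{⊗2} + q(1−q)·K·(B ⊗ B)`. -/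
theorem expected_kronecker_square_fault
    {Ω : Type*} [MeasurableSpace Ω] (μ : Measure Ω) [IsProbabilityMeasure μ]
    (n : ℕ) (hn : 1 ≤ n)
    (B : Matrix (Fin n) (Fin n) ℝ)
    (q : ℝ) (hq0 : 0 ≤ q) (hq1 : q ≤ 1)
    (χ : Fin n → Ω → ℝ)
    (hmeas : ∀ i, Measurable (χ i))
    (hindep : ProbabilityTheory.iIndepFun χ μ)
    (hone : ∀ i, μ {ω | χ i ω = 1} = ENNReal.ofReal (1 - q))
    (hzero : ∀ i, μ {ω | χ i ω = 0} = ENNReal.ofReal q) :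
    matExp μ (fun ω =>
        (1 - Matrix.diagonal (fun i => χ i ω) * B) ⊗ₖ
          (1 - Matrix.diagonal (fun i => χ i ω) * B))
      = (1 - (1 - q) • B) ⊗ₖ (1 - (1 - q) • B)
          + (q * (1 - q)) • (kdiag (Fin n) * (B ⊗ₖ B)) := by
  -- Basic a.e. facts about the Bernoulli variables
  have hSmeas : ∀ i, MeasurableSet {ω | χ i ω = 1} := fun i =>
    (hmeas i) (measurableSet_singleton 1)
  have hae01 : ∀ i, ∀ᵐ ω ∂μ, χ i ω = 1 ∨ χ i ω = 0 := by
    intro i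
    have hdisj : Disjoint {ω | χ i ω = 1} {ω | χ i ω = 0} := by
      rw [Set.disjoint_left]
      intro ω h1 h0
      simp only [Set.mem_setOf_eq] at h1 h0
      rw [h1] at h0; norm_num at h0
    have hunion : μ ({ω | χ i ω = 1} ∪ {ω | χ i ω = 0}) = 1 := by
      rw [measure_union hdisj ((hmeas i) (measurableSet_singleton 0)), hone, hzero,
        ← ENNReal.ofReal_add (by linarith) hq0]
      norm_num
    have hm0 : MeasurableSet {ω | χ i ω = 0} := (hmeas i) (measurableSet_singleton 0)
    have hcompl : μ ({ω | χ i ω = 1} ∪ {ω | χ i ω = 0})ᶜ = 0 := by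
      rw [measure_compl ((hSmeas i).union hm0) (measure_ne_top _ _), hunion,
        measure_univ, tsub_self]
    filter_upwards [measure_eq_zero_iff_ae_notMem.mp hcompl] with ω hω
    simpa [Set.mem_union, Set.mem_setOf_eq] using not_not.mp hω
  have haeInd : ∀ i, χ i =ᵐ[μ] Set.indicator {ω | χ i ω = 1} (fun _ => (1 : ℝ)) := by
    intro i
    filter_upwards [hae01 i] with ω hω
    rcases hω with h | h
    · simp [Set.indicator_of_mem, Set.mem_setOf_eq, h]
    · have : ω ∉ {ω | χ i ω = 1} := by simp [Set.mem_setOf_eq, h]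
      simp [Set.indicator_of_notMem this, h]
  have hint : ∀ i, Integrable (χ i) μ := fun i =>
    ((integrable_const (1 : ℝ)).indicator (hSmeas i)).congr (haeInd i).symm
  have hE : ∀ i, ∫ ω, χ i ω ∂μ = 1 - q := by
    intro i
    rw [integral_congr_ae (haeInd i), integral_indicator_const _ (hSmeas i), measureReal_def, hone i,
      smul_eq_mul, mul_one, ENNReal.toReal_ofReal (by linarith)]
  have hintmul : ∀ i p, Integrable (fun ω => χ i ω * χ p ω) μ := by
    intro i p
    rcases eq_or_ne i p with rfl | hip
    · refine (hint i).congr ?_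
      filter_upwards [hae01 i] with ω hω
      rcases hω with h | h <;> simp [h]
    · exact ProbabilityTheory.IndepFun.integrable_mul
        (hindep.indepFun hip) (hint i) (hint p)
  have hmul : ∀ i p, ∫ ω, χ i ω * χ p ω ∂μ
      = (1 - q) ^ 2 + (if i = p then q * (1 - q) else 0) := by
    intro i p
    rcases eq_or_ne i p with rfl | hip
    · have : (fun ω => χ i ω * χ i ω) =ᵐ[μ] χ i := by
        filter_upwards [hae01 i] with ω hω
        rcases hω with h | h <;> simp [h]
      rw [integral_congr_ae this, hE i]
      simp; ring
    · rw [if_neg hip, add_zero,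
        show (1 - q) ^ 2 = (∫ ω, χ i ω ∂μ) * ∫ ω, χ p ω ∂μ by rw [hE i, hE p]; ring]
      exact ProbabilityTheory.IndepFun.integral_fun_mul_eq_mul_integral
        (hindep.indepFun hip) (hint i).aestronglyMeasurable (hint p).aestronglyMeasurable
  -- Entrywise computation
  ext ⟨i, p⟩ ⟨j, r⟩
  simp only [matExp, Matrix.of_apply, Matrix.kroneckerMap_apply, Matrix.sub_apply,
    Matrix.one_apply, Matrix.diagonal_mul, Matrix.add_apply, Matrix.smul_apply,
    kdiag, smul_eq_mul]
  set a : ℝ := if i = j then 1 else 0 with ha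
  set b : ℝ := if p = r then 1 else 0 with hb
  have hrew : (fun ω => (a - χ i ω * B i j) * (b - χ p ω * B p r))
      = fun ω => (a * b - (a * B p r) * χ p ω - (b * B i j) * χ i ω)
          + (B i j * B p r) * (χ i ω * χ p ω) := by
    funext ω; ring
  rw [show (∫ ω, (a - χ i ω * B i j) * (b - χ p ω * B p r) ∂μ)
      = ∫ ω, ((a * b - (a * B p r) * χ p ω - (b * B i j) * χ i ω)
          + (B i j * B p r) * (χ i ω * χ p ω)) ∂μ from by rw [hrew]]
  have hI2 : Integrable (fun ω => a * b - a * B p r * χ p ω) μ :=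
    (integrable_const _).sub ((hint p).const_mul _)
  have hI1 : Integrable (fun ω => a * b - a * B p r * χ p ω - b * B i j * χ i ω) μ :=
    hI2.sub ((hint i).const_mul _)
  have hI3 : Integrable (fun ω => B i j * B p r * (χ i ω * χ p ω)) μ :=
    (hintmul i p).const_mul _
  rw [integral_add hI1 hI3, integral_sub hI2 ((hint i).const_mul _),
    integral_sub (integrable_const _) ((hint p).const_mul _),
    integral_const, integral_const_mul, integral_const_mul, integral_const_mul,
    hE i, hE p, hmul i p]
  simp only [probReal_univ, one_smul]
  split_ifs <;> ring
end

section
/- Let n ≥ 1, B an n×n real matrix, q ∈ [0,1], and set E := I − B. Then ρ( (I − (1−q)·B)^{⊗2} + q(1−q)·K·(B ⊗ B) ) ≤ (1−q)·‖E‖₂² + q·(‖E‖₂ + ‖B‖₂)², where K is the n²×n² diagonal 0–1 matrix defined by K_{(i,p),(i,p)} = 1 if i = p and all other entries 0. -/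
open MeasureTheory Matrix Filter
open scoped Kronecker ENNReal

/-- The spectral norm (ℓ²-operator norm) of a real matrix. -/
noncomputable def spec2Norm {m n : Type*} [Fintype m] [Fintype n] [DecidableEq n]
    (M : Matrix m n ℝ) : ℝ :=
  ‖LinearMap.toContinuousLinearMap (Matrix.toEuclideanLin M)‖

/-- The spectral radius of a real square matrix: the largest modulus of a complex
eigenvalue, i.e. of an element of the spectrum of the matrix over `ℂ`. -/
noncomputable def specRad {n : Type*} [Fintype n] [DecidableEq n]
    (M : Matrix n n ℝ) : ℝ :=
  sSup ((fun z : ℂ => ‖z‖) '' spectrum ℂ (M.map Complex.ofReal))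

section Aux

open scoped Matrix.Norms.L2Operator

lemma le_of_sq_le_sq' {a b : ℝ} (ha : 0 ≤ a) (hb : 0 ≤ b) (h : a ^ 2 ≤ b ^ 2) : a ≤ b := by
  nlinarith

lemma enorm_sq {𝕜 : Type*} [RCLike 𝕜] {ι : Type*} [Fintype ι] (x : EuclideanSpace 𝕜 ι) :
    ‖x‖ ^ 2 = ∑ i, ‖x i‖ ^ 2 := by
  rw [EuclideanSpace.norm_eq, Real.sq_sqrt (by positivity)]

/-- Bound the L2 operator norm of a matrix by a bound on `mulVec`. -/
lemma l2_opNorm_le_of_forall {𝕜 : Type*} [RCLike 𝕜] {ι κ : Type*} [Fintype ι] [Fintype κ]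
    [DecidableEq ι] (A : Matrix κ ι 𝕜) {c : ℝ} (hc : 0 ≤ c)
    (h : ∀ v : EuclideanSpace 𝕜 ι,
      ‖((WithLp.equiv 2 (κ → 𝕜)).symm (A *ᵥ (WithLp.equiv 2 (ι → 𝕜)) v) : EuclideanSpace 𝕜 κ)‖
        ≤ c * ‖v‖) :
    ‖A‖ ≤ c := by
  rw [Matrix.l2_opNorm_def]
  refine ContinuousLinearMap.opNorm_le_bound _ hc fun v => ?_
  simpa [Matrix.toEuclideanLin_apply] using h v

lemma complex_norm_sq (z : ℂ) : ‖z‖ ^ 2 = z.re ^ 2 + z.im ^ 2 := by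
  rw [Complex.sq_norm, Complex.normSq_apply]; ring

/-- Complexification does not increase the L2 operator norm. -/
lemma l2_opNorm_map_ofReal_le {ι κ : Type*} [Fintype ι] [Fintype κ] [DecidableEq ι]
    (A : Matrix κ ι ℝ) : ‖A.map Complex.ofReal‖ ≤ ‖A‖ := by
  refine l2_opNorm_le_of_forall _ (norm_nonneg _) fun v => ?_
  set f : EuclideanSpace ℝ ι := (WithLp.equiv 2 (ι → ℝ)).symm fun j => (v j).re with hf
  set g : EuclideanSpace ℝ ι := (WithLp.equiv 2 (ι → ℝ)).symm fun j => (v j).im with hg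
  refine le_of_sq_le_sq' (norm_nonneg _) (by positivity) ?_
  have hcoord : ∀ i : κ,
      ‖((A.map Complex.ofReal *ᵥ (WithLp.equiv 2 (ι → ℂ)) v)) i‖ ^ 2
        = ‖(A *ᵥ fun j => (v j).re) i‖ ^ 2 + ‖(A *ᵥ fun j => (v j).im) i‖ ^ 2 := by
    intro i
    have hre : ((A.map Complex.ofReal *ᵥ (WithLp.equiv 2 (ι → ℂ)) v) i).re
        = (A *ᵥ fun j => (v j).re) i := by
      simp [Matrix.mulVec, dotProduct, Complex.re_sum, Complex.mul_re]
    have him : ((A.map Complex.ofReal *ᵥ (WithLp.equiv 2 (ι → ℂ)) v) i).im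
        = (A *ᵥ fun j => (v j).im) i := by
      simp [Matrix.mulVec, dotProduct, Complex.im_sum, Complex.mul_im]
    rw [complex_norm_sq, hre, him]
    simp [Real.norm_eq_abs, sq_abs]
  have h1 : ‖((WithLp.equiv 2 (κ → ℂ)).symm
        (A.map Complex.ofReal *ᵥ (WithLp.equiv 2 (ι → ℂ)) v) : EuclideanSpace ℂ κ)‖ ^ 2
      = ‖((WithLp.equiv 2 (κ → ℝ)).symm (A *ᵥ fun j => (v j).re) : EuclideanSpace ℝ κ)‖ ^ 2
        + ‖((WithLp.equiv 2 (κ → ℝ)).symm (A *ᵥ fun j => (v j).im) : EuclideanSpace ℝ κ)‖ ^ 2 := by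
    simp only [enorm_sq, WithLp.equiv_symm_apply, WithLp.ofLp_toLp]
    rw [← Finset.sum_add_distrib]
    exact Finset.sum_congr rfl fun i _ => hcoord i
  have hvsq : ‖v‖ ^ 2 = ‖f‖ ^ 2 + ‖g‖ ^ 2 := by
    simp only [enorm_sq, hf, hg, WithLp.equiv_symm_apply, WithLp.ofLp_toLp]
    rw [← Finset.sum_add_distrib]
    refine Finset.sum_congr rfl fun j _ => ?_
    rw [complex_norm_sq]
    simp [Real.norm_eq_abs, sq_abs]
  have hA1 : ‖((WithLp.equiv 2 (κ → ℝ)).symm (A *ᵥ fun j => (v j).re) : EuclideanSpace ℝ κ)‖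
      ≤ ‖A‖ * ‖f‖ := by
    have := Matrix.l2_opNorm_mulVec A f
    simpa [hf] using this
  have hA2 : ‖((WithLp.equiv 2 (κ → ℝ)).symm (A *ᵥ fun j => (v j).im) : EuclideanSpace ℝ κ)‖
      ≤ ‖A‖ * ‖g‖ := by
    have := Matrix.l2_opNorm_mulVec A g
    simpa [hg] using this
  have hAn : (0 : ℝ) ≤ ‖A‖ := norm_nonneg _
  rw [h1]
  have e1 : ‖((WithLp.equiv 2 (κ → ℝ)).symm (A *ᵥ fun j => (v j).re) : EuclideanSpace ℝ κ)‖ ^ 2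
      ≤ (‖A‖ * ‖f‖) ^ 2 := by
    have := norm_nonneg ((WithLp.equiv 2 (κ → ℝ)).symm (A *ᵥ fun j => (v j).re) :
      EuclideanSpace ℝ κ)
    nlinarith [hA1]
  have e2 : ‖((WithLp.equiv 2 (κ → ℝ)).symm (A *ᵥ fun j => (v j).im) : EuclideanSpace ℝ κ)‖ ^ 2
      ≤ (‖A‖ * ‖g‖) ^ 2 := by
    have := norm_nonneg ((WithLp.equiv 2 (κ → ℝ)).symm (A *ᵥ fun j => (v j).im) :
      EuclideanSpace ℝ κ)
    nlinarith [hA2]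
  calc _ ≤ (‖A‖ * ‖f‖) ^ 2 + (‖A‖ * ‖g‖) ^ 2 := add_le_add e1 e2
    _ = ‖A‖ ^ 2 * (‖f‖ ^ 2 + ‖g‖ ^ 2) := by ring
    _ = (‖A‖ * ‖v‖) ^ 2 := by rw [← hvsq]; ring

/-- `‖1‖ ≤ 1` for the L2 operator norm. -/
lemma l2_opNorm_one_le {𝕜 : Type*} [RCLike 𝕜] {ι : Type*} [Fintype ι] [DecidableEq ι] :
    ‖(1 : Matrix ι ι 𝕜)‖ ≤ 1 := by
  refine l2_opNorm_le_of_forall _ zero_le_one fun v => ?_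
  simp [Matrix.one_mulVec]

/-- `‖A ⊗ₖ 1‖ ≤ ‖A‖` for the L2 operator norm. -/
lemma l2_opNorm_kron_one_le {ι κ : Type*} [Fintype ι] [Fintype κ] [DecidableEq ι] [DecidableEq κ]
    (A : Matrix ι ι ℝ) : ‖A ⊗ₖ (1 : Matrix κ κ ℝ)‖ ≤ ‖A‖ := by
  refine l2_opNorm_le_of_forall _ (norm_nonneg _) fun v => ?_
  refine le_of_sq_le_sq' (norm_nonneg _) (by positivity) ?_
  have hw : ∀ i p, ((A ⊗ₖ (1 : Matrix κ κ ℝ)) *ᵥ (WithLp.equiv 2 (ι × κ → ℝ)) v) (i, p)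
      = (A *ᵥ fun j => v (j, p)) i := by
    intro i p
    simp [Matrix.mulVec, dotProduct, Fintype.sum_prod_type, Matrix.one_apply,
      mul_ite, ite_mul, mul_zero, zero_mul, mul_assoc]
  have key : ‖((WithLp.equiv 2 (ι × κ → ℝ)).symm
        ((A ⊗ₖ (1 : Matrix κ κ ℝ)) *ᵥ (WithLp.equiv 2 (ι × κ → ℝ)) v) : EuclideanSpace ℝ (ι × κ))‖ ^ 2
      = ∑ p : κ, ‖((WithLp.equiv 2 (ι → ℝ)).symm (A *ᵥ fun j => v (j, p)) :
          EuclideanSpace ℝ ι)‖ ^ 2 := by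
    simp only [enorm_sq, WithLp.equiv_symm_apply, WithLp.ofLp_toLp, Fintype.sum_prod_type]
    rw [Finset.sum_comm]
    refine Finset.sum_congr rfl fun p _ => Finset.sum_congr rfl fun i _ => ?_
    rw [hw i p]
  rw [key]
  have hvsq : ‖v‖ ^ 2 = ∑ p : κ, ∑ j : ι, ‖v (j, p)‖ ^ 2 := by
    rw [enorm_sq, Fintype.sum_prod_type, Finset.sum_comm]
  have step : ∀ p : κ, ‖((WithLp.equiv 2 (ι → ℝ)).symm (A *ᵥ fun j => v (j, p)) :
      EuclideanSpace ℝ ι)‖ ^ 2 ≤ ‖A‖ ^ 2 * ∑ j : ι, ‖v (j, p)‖ ^ 2 := by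
    intro p
    set vp : EuclideanSpace ℝ ι := (WithLp.equiv 2 (ι → ℝ)).symm fun j => v (j, p) with hvp
    have h1 : ‖((WithLp.equiv 2 (ι → ℝ)).symm (A *ᵥ fun j => v (j, p)) : EuclideanSpace ℝ ι)‖
        ≤ ‖A‖ * ‖vp‖ := by
      have := Matrix.l2_opNorm_mulVec A vp
      simpa [hvp] using this
    have h2 : ‖vp‖ ^ 2 = ∑ j : ι, ‖v (j, p)‖ ^ 2 := by
      simp [enorm_sq, hvp, WithLp.equiv_symm_apply, WithLp.ofLp_toLp]
    have := norm_nonneg ((WithLp.equiv 2 (ι → ℝ)).symm (A *ᵥ fun j => v (j, p)) :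
      EuclideanSpace ℝ ι)
    nlinarith [norm_nonneg A, norm_nonneg vp]
  calc ∑ p : κ, ‖((WithLp.equiv 2 (ι → ℝ)).symm (A *ᵥ fun j => v (j, p)) :
        EuclideanSpace ℝ ι)‖ ^ 2
      ≤ ∑ p : κ, ‖A‖ ^ 2 * ∑ j : ι, ‖v (j, p)‖ ^ 2 := Finset.sum_le_sum fun p _ => step p
    _ = (‖A‖ * ‖v‖) ^ 2 := by rw [← Finset.mul_sum, ← hvsq]; ring

/-- `‖1 ⊗ₖ B‖ ≤ ‖B‖` for the L2 operator norm. -/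
lemma l2_opNorm_one_kron_le {ι κ : Type*} [Fintype ι] [Fintype κ] [DecidableEq ι] [DecidableEq κ]
    (B : Matrix κ κ ℝ) : ‖(1 : Matrix ι ι ℝ) ⊗ₖ B‖ ≤ ‖B‖ := by
  refine l2_opNorm_le_of_forall _ (norm_nonneg _) fun v => ?_
  refine le_of_sq_le_sq' (norm_nonneg _) (by positivity) ?_
  have hw : ∀ i p, (((1 : Matrix ι ι ℝ) ⊗ₖ B) *ᵥ (WithLp.equiv 2 (ι × κ → ℝ)) v) (i, p)
      = (B *ᵥ fun q => v (i, q)) p := by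
    intro i p
    simp [Matrix.mulVec, dotProduct, Fintype.sum_prod_type, Matrix.one_apply,
      mul_ite, ite_mul, mul_zero, zero_mul, mul_assoc]
  have key : ‖((WithLp.equiv 2 (ι × κ → ℝ)).symm
        (((1 : Matrix ι ι ℝ) ⊗ₖ B) *ᵥ (WithLp.equiv 2 (ι × κ → ℝ)) v) :
          EuclideanSpace ℝ (ι × κ))‖ ^ 2
      = ∑ i : ι, ‖((WithLp.equiv 2 (κ → ℝ)).symm (B *ᵥ fun q => v (i, q)) :
          EuclideanSpace ℝ κ)‖ ^ 2 := by
    simp only [enorm_sq, WithLp.equiv_symm_apply, WithLp.ofLp_toLp, Fintype.sum_prod_type]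
    refine Finset.sum_congr rfl fun i _ => Finset.sum_congr rfl fun p _ => ?_
    rw [hw i p]
  rw [key]
  have hvsq : ‖v‖ ^ 2 = ∑ i : ι, ∑ q : κ, ‖v (i, q)‖ ^ 2 := by
    rw [enorm_sq, Fintype.sum_prod_type]
  have step : ∀ i : ι, ‖((WithLp.equiv 2 (κ → ℝ)).symm (B *ᵥ fun q => v (i, q)) :
      EuclideanSpace ℝ κ)‖ ^ 2 ≤ ‖B‖ ^ 2 * ∑ q : κ, ‖v (i, q)‖ ^ 2 := by
    intro i
    set vi : EuclideanSpace ℝ κ := (WithLp.equiv 2 (κ → ℝ)).symm fun q => v (i, q) with hvi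
    have h1 : ‖((WithLp.equiv 2 (κ → ℝ)).symm (B *ᵥ fun q => v (i, q)) : EuclideanSpace ℝ κ)‖
        ≤ ‖B‖ * ‖vi‖ := by
      have := Matrix.l2_opNorm_mulVec B vi
      simpa [hvi] using this
    have h2 : ‖vi‖ ^ 2 = ∑ q : κ, ‖v (i, q)‖ ^ 2 := by
      simp [enorm_sq, hvi, WithLp.equiv_symm_apply, WithLp.ofLp_toLp]
    have := norm_nonneg ((WithLp.equiv 2 (κ → ℝ)).symm (B *ᵥ fun q => v (i, q)) :
      EuclideanSpace ℝ κ)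
    nlinarith [norm_nonneg B, norm_nonneg vi]
  calc ∑ i : ι, ‖((WithLp.equiv 2 (κ → ℝ)).symm (B *ᵥ fun q => v (i, q)) :
        EuclideanSpace ℝ κ)‖ ^ 2
      ≤ ∑ i : ι, ‖B‖ ^ 2 * ∑ q : κ, ‖v (i, q)‖ ^ 2 := Finset.sum_le_sum fun i _ => step i
    _ = (‖B‖ * ‖v‖) ^ 2 := by rw [← Finset.mul_sum, ← hvsq]; ring

/-- `‖A ⊗ₖ B‖ ≤ ‖A‖ * ‖B‖` for the L2 operator norm. -/
lemma l2_opNorm_kron_le {ι κ : Type*} [Fintype ι] [Fintype κ] [DecidableEq ι] [DecidableEq κ]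
    (A : Matrix ι ι ℝ) (B : Matrix κ κ ℝ) : ‖A ⊗ₖ B‖ ≤ ‖A‖ * ‖B‖ := by
  have hfact : A ⊗ₖ B = (A ⊗ₖ (1 : Matrix κ κ ℝ)) * ((1 : Matrix ι ι ℝ) ⊗ₖ B) := by
    rw [← Matrix.mul_kronecker_mul, mul_one, one_mul]
  rw [hfact]
  calc ‖(A ⊗ₖ (1 : Matrix κ κ ℝ)) * ((1 : Matrix ι ι ℝ) ⊗ₖ B)‖
      ≤ ‖A ⊗ₖ (1 : Matrix κ κ ℝ)‖ * ‖(1 : Matrix ι ι ℝ) ⊗ₖ B‖ := Matrix.l2_opNorm_mul _ _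
    _ ≤ ‖A‖ * ‖B‖ := by
        have h1 := l2_opNorm_kron_one_le (κ := κ) A
        have h2 := l2_opNorm_one_kron_le (ι := ι) B
        have := norm_nonneg ((1 : Matrix ι ι ℝ) ⊗ₖ B)
        have := norm_nonneg A
        nlinarith [norm_nonneg (A ⊗ₖ (1 : Matrix κ κ ℝ)), norm_nonneg B]

/-- `‖kdiag‖ ≤ 1` for the L2 operator norm. -/
lemma l2_opNorm_kdiag_le {ι : Type*} [Fintype ι] [DecidableEq ι] :
    ‖kdiag ι‖ ≤ 1 := by
  refine l2_opNorm_le_of_forall _ zero_le_one fun v => ?_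
  refine le_of_sq_le_sq' (norm_nonneg _) (by positivity) ?_
  have hw : ∀ ip : ι × ι, (kdiag ι *ᵥ (WithLp.equiv 2 (ι × ι → ℝ)) v) ip
      = (if ip.1 = ip.2 then 1 else 0) * v ip := by
    intro ip
    simp [kdiag, Matrix.mulVec_diagonal]
  calc ‖((WithLp.equiv 2 (ι × ι → ℝ)).symm (kdiag ι *ᵥ (WithLp.equiv 2 (ι × ι → ℝ)) v) :
        EuclideanSpace ℝ (ι × ι))‖ ^ 2
      = ∑ ip : ι × ι, ‖(if ip.1 = ip.2 then (1 : ℝ) else 0) * v ip‖ ^ 2 := by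
        simp only [enorm_sq, WithLp.equiv_symm_apply, WithLp.ofLp_toLp]
        exact Finset.sum_congr rfl fun ip _ => by rw [hw ip]
    _ ≤ ∑ ip : ι × ι, ‖v ip‖ ^ 2 := by
        refine Finset.sum_le_sum fun ip _ => ?_
        by_cases h : ip.1 = ip.2 <;> simp [h]
        positivity
    _ = (1 * ‖v‖) ^ 2 := by rw [one_mul, enorm_sq]

lemma spec2Norm_eq_l2 {m n : Type*} [Fintype m] [Fintype n] [DecidableEq n]
    (M : Matrix m n ℝ) : spec2Norm M = ‖M‖ := rfl

theorem specRad_kron_bound_aux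
    (n : ℕ) (hn : 1 ≤ n)
    (B : Matrix (Fin n) (Fin n) ℝ)
    (q : ℝ) (hq0 : 0 ≤ q) (hq1 : q ≤ 1) :
    specRad ((1 - (1 - q) • B) ⊗ₖ (1 - (1 - q) • B)
        + (q * (1 - q)) • (kdiag (Fin n) * (B ⊗ₖ B)))
      ≤ (1 - q) * spec2Norm (1 - B) ^ 2
          + q * (spec2Norm (1 - B) + spec2Norm B) ^ 2 := by
  classical
  set E : Matrix (Fin n) (Fin n) ℝ := 1 - B with hE
  set e : ℝ := spec2Norm (1 - B) with he
  set b : ℝ := spec2Norm B with hb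
  have heb : e = ‖E‖ := rfl
  have hbb : b = ‖B‖ := rfl
  have he0 : 0 ≤ e := by rw [heb]; exact norm_nonneg _
  have hb0 : 0 ≤ b := by rw [hbb]; exact norm_nonneg _
  have h1q : 0 ≤ 1 - q := by linarith
  set M : Matrix (Fin n × Fin n) (Fin n × Fin n) ℝ :=
    (1 - (1 - q) • B) ⊗ₖ (1 - (1 - q) • B) + (q * (1 - q)) • (kdiag (Fin n) * (B ⊗ₖ B)) with hMdef
  -- Step 1: bound ‖M‖
  have hsplit : (1 : Matrix (Fin n) (Fin n) ℝ) - (1 - q) • B = E + q • B := by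
    rw [hE, sub_smul, one_smul]
    abel
  have hMeq : M = E ⊗ₖ E + q • (E ⊗ₖ B) + q • (B ⊗ₖ E) + (q * q) • (B ⊗ₖ B)
      + (q * (1 - q)) • (kdiag (Fin n) * (B ⊗ₖ B)) := by
    rw [hMdef, hsplit, Matrix.add_kronecker, Matrix.kronecker_add, Matrix.kronecker_add,
      Matrix.smul_kronecker, Matrix.kronecker_smul, Matrix.kronecker_smul,
      Matrix.smul_kronecker, smul_smul]
    abel
  have habs : ∀ r : ℝ, 0 ≤ r → ∀ X : Matrix (Fin n × Fin n) (Fin n × Fin n) ℝ,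
      ‖r • X‖ = r * ‖X‖ := by
    intro r hr X
    rw [norm_smul, Real.norm_eq_abs, abs_of_nonneg hr]
  have hK : ‖kdiag (Fin n) * (B ⊗ₖ B)‖ ≤ b * b := by
    calc ‖kdiag (Fin n) * (B ⊗ₖ B)‖ ≤ ‖kdiag (Fin n)‖ * ‖B ⊗ₖ B‖ := Matrix.l2_opNorm_mul _ _
      _ ≤ 1 * (b * b) := by
          have h1 := l2_opNorm_kdiag_le (ι := Fin n)
          have h2 := l2_opNorm_kron_le B B
          have h3 := norm_nonneg (B ⊗ₖ B)
          have h4 := norm_nonneg (kdiag (Fin n))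
          rw [hbb]
          nlinarith
      _ = b * b := one_mul _
  have hMnorm : ‖M‖ ≤ e * e + q * (e * b) + q * (b * e) + (q * q) * (b * b)
      + (q * (1 - q)) * (b * b) := by
    rw [hMeq]
    have t1 : ‖E ⊗ₖ E‖ ≤ e * e := by rw [heb]; exact l2_opNorm_kron_le E E
    have t2 : ‖E ⊗ₖ B‖ ≤ e * b := by rw [heb, hbb]; exact l2_opNorm_kron_le E B
    have t3 : ‖B ⊗ₖ E‖ ≤ b * e := by rw [heb, hbb]; exact l2_opNorm_kron_le B E
    have t4 : ‖B ⊗ₖ B‖ ≤ b * b := by rw [hbb]; exact l2_opNorm_kron_le B B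
    have hqq : 0 ≤ q * q := mul_nonneg hq0 hq0
    have hq1q : 0 ≤ q * (1 - q) := mul_nonneg hq0 h1q
    calc ‖E ⊗ₖ E + q • (E ⊗ₖ B) + q • (B ⊗ₖ E) + (q * q) • (B ⊗ₖ B)
          + (q * (1 - q)) • (kdiag (Fin n) * (B ⊗ₖ B))‖
        ≤ ‖E ⊗ₖ E + q • (E ⊗ₖ B) + q • (B ⊗ₖ E) + (q * q) • (B ⊗ₖ B)‖
          + ‖(q * (1 - q)) • (kdiag (Fin n) * (B ⊗ₖ B))‖ := norm_add_le _ _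
      _ ≤ (‖E ⊗ₖ E + q • (E ⊗ₖ B) + q • (B ⊗ₖ E)‖ + ‖(q * q) • (B ⊗ₖ B)‖)
          + ‖(q * (1 - q)) • (kdiag (Fin n) * (B ⊗ₖ B))‖ := by
            gcongr; exact norm_add_le _ _
      _ ≤ ((‖E ⊗ₖ E + q • (E ⊗ₖ B)‖ + ‖q • (B ⊗ₖ E)‖) + ‖(q * q) • (B ⊗ₖ B)‖)
          + ‖(q * (1 - q)) • (kdiag (Fin n) * (B ⊗ₖ B))‖ := by
            gcongr; exact norm_add_le _ _
      _ ≤ (((‖E ⊗ₖ E‖ + ‖q • (E ⊗ₖ B)‖) + ‖q • (B ⊗ₖ E)‖) + ‖(q * q) • (B ⊗ₖ B)‖)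
          + ‖(q * (1 - q)) • (kdiag (Fin n) * (B ⊗ₖ B))‖ := by
            gcongr; exact norm_add_le _ _
      _ ≤ e * e + q * (e * b) + q * (b * e) + (q * q) * (b * b)
          + (q * (1 - q)) * (b * b) := by
            rw [habs q hq0, habs q hq0, habs (q * q) hqq, habs (q * (1 - q)) hq1q]
            gcongr
  -- Step 2: spectral radius ≤ complex norm ≤ real norm
  have hRHS0 : 0 ≤ (1 - q) * e ^ 2 + q * (e + b) ^ 2 :=
    add_nonneg (mul_nonneg h1q (sq_nonneg _)) (mul_nonneg hq0 (sq_nonneg _))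
  rw [specRad]
  refine Real.sSup_le ?_ hRHS0
  rintro x ⟨z, hz, rfl⟩
  haveI : CompleteSpace (Matrix (Fin n × Fin n) (Fin n × Fin n) ℂ) :=
    FiniteDimensional.complete ℂ _
  have h1 : ‖z‖ ≤ ‖M.map Complex.ofReal‖ * ‖(1 : Matrix (Fin n × Fin n) (Fin n × Fin n) ℂ)‖ :=
    spectrum.norm_le_norm_mul_of_mem hz
  have h2 : ‖z‖ ≤ ‖M.map Complex.ofReal‖ :=
    h1.trans (mul_le_of_le_one_right (norm_nonneg _) l2_opNorm_one_le)
  have h3 : ‖z‖ ≤ ‖M‖ := h2.trans (l2_opNorm_map_ofReal_le M)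
  have h4 : ‖z‖ ≤ ‖M‖ := h3
  have hfinal : e * e + q * (e * b) + q * (b * e) + (q * q) * (b * b)
      + (q * (1 - q)) * (b * b) = (1 - q) * e ^ 2 + q * (e + b) ^ 2 := by ring
  calc ‖z‖ ≤ ‖M‖ := h4
    _ ≤ _ := hMnorm
    _ = (1 - q) * e ^ 2 + q * (e + b) ^ 2 := hfinal

end Aux

/-- Spectral radius bound for the expected Kronecker square of the fault-prone
smoothener: with `E := I − B`,
`ρ((I−(1−q)B)^{⊗2} + q(1−q)K(B⊗B)) ≤ (1−q)‖E‖₂² + q(‖E‖₂ + ‖B‖₂)²`. -/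
theorem specRad_expected_kronecker_square_bound
    (n : ℕ) (hn : 1 ≤ n)
    (B : Matrix (Fin n) (Fin n) ℝ)
    (q : ℝ) (hq0 : 0 ≤ q) (hq1 : q ≤ 1) :
    specRad ((1 - (1 - q) • B) ⊗ₖ (1 - (1 - q) • B)
        + (q * (1 - q)) • (kdiag (Fin n) * (B ⊗ₖ B)))
      ≤ (1 - q) * spec2Norm (1 - B) ^ 2
          + q * (spec2Norm (1 - B) + spec2Norm B) ^ 2 :=
  specRad_kron_bound_aux n hn B q hq0 hq1
end

section
/- Let Z be an n×m real matrix. Then the spectral norm of its entrywise square satisfies ‖Z ∘ Z‖₂ ≤ ( max_{i=1,…,m} ‖Z e_m^{(i)}‖₂ ) · ( max_{j=1,…,n} ‖Zᵀ e_n^{(j)}‖₂ ) ≤ ‖Z‖₂², where e_m^{(i)} and e_n^{(j)} are the canonical unit basis vectors of ℝ^m and ℝ^n respectively. -/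
open Matrix
open scoped Kronecker

/-- The Euclidean norm of a real vector. -/
noncomputable def euclNorm {n : Type*} [Fintype n] (v : n → ℝ) : ℝ :=
  Real.sqrt (∑ j, (v j) ^ 2)

lemma eucl_eq {k : Type*} [Fintype k] (v : k → ℝ) :
    ‖(WithLp.equiv 2 (k → ℝ)).symm v‖ = euclNorm v := by
  rw [EuclideanSpace.norm_eq]
  simp [euclNorm, sq_abs]

lemma eucl_eq' {k : Type*} [Fintype k] (x : EuclideanSpace ℝ k) :
    euclNorm ((WithLp.equiv 2 (k → ℝ)) x) = ‖x‖ := by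
  rw [← eucl_eq]; simp

lemma spec2_apply_le {n m : Type*} [Fintype n] [Fintype m] [DecidableEq m]
    (M : Matrix n m ℝ) (v : m → ℝ) :
    euclNorm (M.mulVec v) ≤ spec2Norm M * euclNorm v := by
  have h := (LinearMap.toContinuousLinearMap (Matrix.toEuclideanLin M)).le_opNorm
    ((WithLp.equiv 2 (m → ℝ)).symm v)
  have e1 := eucl_eq (M *ᵥ v)
  have e2 := eucl_eq v
  simp at e1 e2
  simpa [spec2Norm, Matrix.toEuclideanLin_apply, eucl_eq, e1, e2] using h

lemma spec2_le_of {n m : Type*} [Fintype n] [Fintype m] [DecidableEq m]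
    (M : Matrix n m ℝ) (c : ℝ) (hc : 0 ≤ c)
    (h : ∀ v : m → ℝ, euclNorm (M.mulVec v) ≤ c * euclNorm v) :
    spec2Norm M ≤ c := by
  refine ContinuousLinearMap.opNorm_le_bound _ hc fun x => ?_
  have := h ((WithLp.equiv 2 (m → ℝ)) x)
  rw [eucl_eq'] at this
  have e1 := eucl_eq (M *ᵥ x.ofLp)
  simp at e1
  simpa [Matrix.toEuclideanLin_apply, eucl_eq, e1] using this


/-- The spectral norm of the Hadamard square of a matrix is bounded by the product of
the maximal Euclidean column norm and the maximal Euclidean row norm, which in turn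
is bounded by the square of the spectral norm:
`‖Z∘Z‖₂ ≤ (max_i ‖Z e^{(i)}‖₂)(max_j ‖Zᵀ e^{(j)}‖₂) ≤ ‖Z‖₂²`. -/
theorem spec2Norm_hadamard_square_le
    (n m : ℕ) (Z : Matrix (Fin n) (Fin m) ℝ) :
    spec2Norm (Z ⊙ Z)
        ≤ (⨆ i : Fin m, euclNorm (Z.mulVec (Pi.single i 1))) *
            (⨆ j : Fin n, euclNorm (Zᵀ.mulVec (Pi.single j 1))) ∧
      (⨆ i : Fin m, euclNorm (Z.mulVec (Pi.single i 1))) *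
          (⨆ j : Fin n, euclNorm (Zᵀ.mulVec (Pi.single j 1)))
        ≤ spec2Norm Z ^ 2 := by
  classical
  set C := (⨆ i : Fin m, euclNorm (Z.mulVec (Pi.single i 1))) with hCdef
  set R := (⨆ j : Fin n, euclNorm (Zᵀ.mulVec (Pi.single j 1))) with hRdef
  have hC0 : 0 ≤ C := Real.iSup_nonneg fun i => Real.sqrt_nonneg _
  have hR0 : 0 ≤ R := Real.iSup_nonneg fun j => Real.sqrt_nonneg _
  have hspec0 : 0 ≤ spec2Norm Z := norm_nonneg _
  have hcol : ∀ i : Fin m, Real.sqrt (∑ j, Z j i ^ 2) ≤ C := by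
    intro i
    have h := le_ciSup (f := fun i : Fin m => euclNorm (Z.mulVec (Pi.single i 1)))
      (Finite.bddAbove_range _) i
    have e : Real.sqrt (∑ j, Z j i ^ 2) = euclNorm (Z.mulVec (Pi.single i 1)) := by
      simp [euclNorm, Matrix.mulVec_single_one]
    rw [e]; exact h
  have hrow : ∀ j : Fin n, Real.sqrt (∑ i, Z j i ^ 2) ≤ R := by
    intro j
    have h := le_ciSup (f := fun j : Fin n => euclNorm (Zᵀ.mulVec (Pi.single j 1)))
      (Finite.bddAbove_range _) j
    have e : Real.sqrt (∑ i, Z j i ^ 2) = euclNorm (Zᵀ.mulVec (Pi.single j 1)) := by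
      simp [euclNorm, Matrix.mulVec_single_one]
    rw [e]; exact h
  have hrowsq : ∀ j, (∑ i, Z j i ^ 2) ≤ R ^ 2 := fun j => by
    have h := pow_le_pow_left₀ (Real.sqrt_nonneg _) (hrow j) 2
    rwa [Real.sq_sqrt (Finset.sum_nonneg fun i _ => sq_nonneg _)] at h
  have hcolsq : ∀ i, (∑ j, Z j i ^ 2) ≤ C ^ 2 := fun i => by
    have h := pow_le_pow_left₀ (Real.sqrt_nonneg _) (hcol i) 2
    rwa [Real.sq_sqrt (Finset.sum_nonneg fun j _ => sq_nonneg _)] at h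
  constructor
  · refine spec2_le_of _ _ (mul_nonneg hC0 hR0) fun v => ?_
    have key : ∑ j, ((Z ⊙ Z).mulVec v j) ^ 2 ≤ (C * R) ^ 2 * ∑ i, v i ^ 2 := by
      have step : ∀ j : Fin n, ((Z ⊙ Z).mulVec v j) ^ 2
          ≤ R ^ 2 * ∑ i, Z j i ^ 2 * v i ^ 2 := by
        intro j
        have h1 : ((Z ⊙ Z).mulVec v j) = ∑ i, Z j i * (Z j i * v i) := by
          simp [Matrix.mulVec, dotProduct, Matrix.hadamard, mul_assoc]
        rw [h1]
        calc (∑ i, Z j i * (Z j i * v i)) ^ 2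
            ≤ (∑ i, Z j i ^ 2) * ∑ i, (Z j i * v i) ^ 2 :=
              Finset.sum_mul_sq_le_sq_mul_sq _ _ _
          _ ≤ R ^ 2 * ∑ i, Z j i ^ 2 * v i ^ 2 := by
              simp_rw [mul_pow]
              exact mul_le_mul_of_nonneg_right (hrowsq j)
                (Finset.sum_nonneg fun i _ => mul_nonneg (sq_nonneg _) (sq_nonneg _))
      calc ∑ j, ((Z ⊙ Z).mulVec v j) ^ 2
          ≤ ∑ j, R ^ 2 * ∑ i, Z j i ^ 2 * v i ^ 2 :=
            Finset.sum_le_sum fun j _ => step j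
        _ = R ^ 2 * ∑ i, (∑ j, Z j i ^ 2) * v i ^ 2 := by
            rw [← Finset.mul_sum, Finset.sum_comm]
            simp_rw [Finset.sum_mul]
        _ ≤ R ^ 2 * ∑ i, C ^ 2 * v i ^ 2 := by
            refine mul_le_mul_of_nonneg_left (Finset.sum_le_sum fun i _ => ?_) (sq_nonneg _)
            exact mul_le_mul_of_nonneg_right (hcolsq i) (sq_nonneg _)
        _ = (C * R) ^ 2 * ∑ i, v i ^ 2 := by
            rw [← Finset.mul_sum]; ring
    have h := Real.sqrt_le_sqrt key
    rw [Real.sqrt_mul (sq_nonneg _), Real.sqrt_sq (mul_nonneg hC0 hR0)] at h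
    exact h
  · have hC : C ≤ spec2Norm Z := by
      rcases isEmpty_or_nonempty (Fin m) with hm | hm
      · rw [hCdef, Real.iSup_of_isEmpty]; exact hspec0
      · refine ciSup_le fun i => ?_
        have h := spec2_apply_le Z (Pi.single i 1)
        have h1 : euclNorm (Pi.single i (1:ℝ)) = 1 := by
          simp [euclNorm, Pi.single_apply, apply_ite (· ^ 2)]
        rwa [h1, mul_one] at h
    have hR : R ≤ spec2Norm Z := by
      rcases isEmpty_or_nonempty (Fin n) with hn | hn
      · rw [hRdef, Real.iSup_of_isEmpty]; exact hspec0
      · refine ciSup_le fun j => ?_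
        have hform : euclNorm (Zᵀ.mulVec (Pi.single j 1)) = Real.sqrt (∑ i, Z j i ^ 2) := by
          simp [euclNorm, Matrix.mulVec_single_one]
        rw [hform]
        set s := ∑ i, Z j i ^ 2 with hs
        have hs0 : 0 ≤ s := Finset.sum_nonneg fun i _ => sq_nonneg _
        rcases eq_or_lt_of_le hs0 with h0 | hpos
        · rw [← h0, Real.sqrt_zero]; exact hspec0
        · set v : Fin m → ℝ := fun i => Z j i / Real.sqrt s with hv
          have hv1 : euclNorm v = 1 := by
            simp only [euclNorm, hv, div_pow, Real.sq_sqrt hs0, ← Finset.sum_div]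
            rw [← hs, div_self (ne_of_gt hpos), Real.sqrt_one]
          have hmv : Z.mulVec v j = Real.sqrt s := by
            simp only [Matrix.mulVec, dotProduct, hv]
            rw [Finset.sum_congr rfl fun i _ =>
              show Z j i * (Z j i / Real.sqrt s) = Z j i ^ 2 / Real.sqrt s by ring]
            rw [← Finset.sum_div, ← hs, Real.div_sqrt]
          have h1 : Real.sqrt s ≤ euclNorm (Z.mulVec v) := by
            have hle : (Z.mulVec v j) ^ 2 ≤ ∑ k, (Z.mulVec v k) ^ 2 :=
              Finset.single_le_sum (f := fun k => (Z.mulVec v k) ^ 2) (fun k _ => sq_nonneg _) (Finset.mem_univ j)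
            calc Real.sqrt s = Real.sqrt ((Z.mulVec v j) ^ 2) := by
                  rw [hmv, Real.sqrt_sq (Real.sqrt_nonneg _)]
              _ ≤ euclNorm (Z.mulVec v) := Real.sqrt_le_sqrt hle
          have h2 := spec2_apply_le Z v
          rw [hv1, mul_one] at h2
          exact h1.trans h2
    calc C * R ≤ spec2Norm Z * spec2Norm Z :=
        mul_le_mul hC hR hR0 hspec0
      _ = spec2Norm Z ^ 2 := (sq _).symm
end

section
/- Let A be an m×m real symmetric matrix, C an n×n real symmetric matrix, and B an n×m real matrix, and suppose that the (m+n)×(m+n) block matrix [[A, Bᵀ],[B, C]] is positive semidefinite. Then ‖B‖₂² ≤ ‖A‖₂ · ‖C‖₂. -/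
open Matrix
open scoped RealInnerProductSpace

lemma dot_self_nonneg' {k : Type*} [Fintype k] (x : k → ℝ) : 0 ≤ x ⬝ᵥ x :=
  Finset.sum_nonneg fun i _ => mul_self_nonneg _

lemma norm_sq_eq_dot {k : Type*} [Fintype k] (x : k → ℝ) :
    ‖(WithLp.equiv 2 (k → ℝ)).symm x‖ ^ 2 = x ⬝ᵥ x := by
  rw [← real_inner_self_eq_norm_sq]
  simp [PiLp.inner_apply, RCLike.inner_apply, dotProduct]
  rw [EuclideanSpace.norm_sq_eq]; simp [sq]

lemma quad_le_spec {k : Type*} [Fintype k] [DecidableEq k]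
    (M : Matrix k k ℝ) (x : k → ℝ) :
    x ⬝ᵥ (M *ᵥ x) ≤ spec2Norm M * (x ⬝ᵥ x) := by
  have h1 : x ⬝ᵥ (M *ᵥ x) = ⟪(WithLp.equiv 2 (k → ℝ)).symm x,
      (LinearMap.toContinuousLinearMap (Matrix.toEuclideanLin M))
        ((WithLp.equiv 2 (k → ℝ)).symm x)⟫ := by
    simp [Matrix.toEuclideanLin_apply_piLp_toLp, PiLp.inner_apply, RCLike.inner_apply,
      dotProduct, PiLp.toLp_apply, mul_comm]
  set L := LinearMap.toContinuousLinearMap (Matrix.toEuclideanLin M) with hL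
  set x' : EuclideanSpace ℝ k := (WithLp.equiv 2 (k → ℝ)).symm x with hx'
  have h2 : ⟪x', L x'⟫ ≤ ‖x'‖ * ‖L x'‖ := real_inner_le_norm _ _
  have h3 : ‖L x'‖ ≤ ‖L‖ * ‖x'‖ := L.le_opNorm _
  have h4 : ‖x'‖ ^ 2 = x ⬝ᵥ x := norm_sq_eq_dot x
  have h5 : 0 ≤ ‖x'‖ := norm_nonneg _
  calc x ⬝ᵥ (M *ᵥ x) = ⟪x', L x'⟫ := h1
    _ ≤ ‖x'‖ * ‖L x'‖ := h2
    _ ≤ ‖x'‖ * (‖L‖ * ‖x'‖) := by nlinarith [norm_nonneg (L x')]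
    _ = ‖L‖ * ‖x'‖ ^ 2 := by ring
    _ = spec2Norm M * (x ⬝ᵥ x) := by rw [h4]; rfl

/-- If the symmetric block matrix `[[A, Bᵀ],[B, C]]` is positive semidefinite, then
`‖B‖₂² ≤ ‖A‖₂·‖C‖₂`. -/
theorem spec2Norm_offdiag_block_le
    (m n : ℕ)
    (A : Matrix (Fin m) (Fin m) ℝ) (C : Matrix (Fin n) (Fin n) ℝ)
    (B : Matrix (Fin n) (Fin m) ℝ)
    (hA : Aᵀ = A) (hC : Cᵀ = C)
    (hH : (Matrix.fromBlocks A Bᵀ B C).PosSemidef) :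
    spec2Norm B ^ 2 ≤ spec2Norm A * spec2Norm C := by
  set a := spec2Norm A with ha
  set c := spec2Norm C with hc
  have ha0 : (0:ℝ) ≤ a := norm_nonneg _
  have hc0 : (0:ℝ) ≤ c := norm_nonneg _
  -- quadratic nonnegativity, expanded
  have hexp : ∀ (x : Fin m → ℝ) (y : Fin n → ℝ),
      0 ≤ x ⬝ᵥ (A *ᵥ x) + 2 * (y ⬝ᵥ (B *ᵥ x)) + y ⬝ᵥ (C *ᵥ y) := by
    intro x y
    have h := hH.dotProduct_mulVec_nonneg (Sum.elim x y)
    rw [star_trivial, fromBlocks_mulVec, sumElim_dotProduct_sumElim] at h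
    have hBt : x ⬝ᵥ (Bᵀ *ᵥ y) = y ⬝ᵥ (B *ᵥ x) := by
      rw [Matrix.dotProduct_mulVec, Matrix.vecMul_transpose, dotProduct_comm]
    simp only [Sum.elim_comp_inl, Sum.elim_comp_inr, dotProduct_add] at h
    rw [hBt] at h
    linarith
  -- Cauchy-Schwarz style bound via discriminant
  have key : ∀ (x : Fin m → ℝ) (y : Fin n → ℝ),
      (y ⬝ᵥ (B *ᵥ x)) ^ 2 ≤ (x ⬝ᵥ (A *ᵥ x)) * (y ⬝ᵥ (C *ᵥ y)) := by
    intro x y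
    have hq : ∀ t : ℝ, 0 ≤ (y ⬝ᵥ (C *ᵥ y)) * (t * t) + (2 * (y ⬝ᵥ (B *ᵥ x))) * t
        + x ⬝ᵥ (A *ᵥ x) := by
      intro t
      have h := hexp x (t • y)
      rw [Matrix.mulVec_smul] at h
      simp only [smul_dotProduct, dotProduct_smul, smul_eq_mul] at h
      nlinarith [h]
    have hd := discrim_le_zero hq
    rw [discrim] at hd
    nlinarith [hd]
  -- pointwise bound on ‖Bx‖²
  have hBx : ∀ x : Fin m → ℝ, (B *ᵥ x) ⬝ᵥ (B *ᵥ x) ≤ a * c * (x ⬝ᵥ x) := by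
    intro x
    set y := B *ᵥ x with hy
    have h1 := key x y
    have h2 := quad_le_spec A x
    have h3 := quad_le_spec C y
    have hqa : 0 ≤ x ⬝ᵥ (A *ᵥ x) := by have := hexp x 0; simpa using this
    have hqc : 0 ≤ y ⬝ᵥ (C *ᵥ y) := by
      have := hexp 0 y
      simpa [Matrix.mulVec_zero] using this
    have hyy : 0 ≤ y ⬝ᵥ y := dot_self_nonneg' y
    have hxx : 0 ≤ x ⬝ᵥ x := dot_self_nonneg' x
    rcases eq_or_lt_of_le hyy with h0 | h0
    · rw [← h0]; positivity
    · -- (y⬝ᵥy)^2 ≤ qa*qc ≤ (a X)(c s)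
      have hs : (y ⬝ᵥ y) ^ 2 ≤ (a * (x ⬝ᵥ x)) * (c * (y ⬝ᵥ y)) := by
        calc (y ⬝ᵥ y) ^ 2 ≤ (x ⬝ᵥ (A *ᵥ x)) * (y ⬝ᵥ (C *ᵥ y)) := h1
          _ ≤ (a * (x ⬝ᵥ x)) * (c * (y ⬝ᵥ y)) := by nlinarith
      nlinarith [hs]
  -- conclude operator norm bound
  have hB : spec2Norm B ≤ Real.sqrt (a * c) := by
    apply ContinuousLinearMap.opNorm_le_bound _ (Real.sqrt_nonneg _)
    intro x'
    set x : Fin m → ℝ := WithLp.equiv 2 (Fin m → ℝ) x' with hx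
    have hx' : x' = (WithLp.equiv 2 (Fin m → ℝ)).symm x := rfl
    have himg : (LinearMap.toContinuousLinearMap (Matrix.toEuclideanLin B)) x'
        = (WithLp.equiv 2 (Fin n → ℝ)).symm (B *ᵥ x) := by
      rw [hx']
      simp [LinearMap.coe_toContinuousLinearMap', Matrix.toEuclideanLin_apply_piLp_toLp]
    rw [himg]
    have h1 : ‖(WithLp.equiv 2 (Fin n → ℝ)).symm (B *ᵥ x)‖ ^ 2 = (B *ᵥ x) ⬝ᵥ (B *ᵥ x) :=
      norm_sq_eq_dot _
    have h2 : ‖x'‖ ^ 2 = x ⬝ᵥ x := by rw [hx']; exact norm_sq_eq_dot _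
    have h3 := hBx x
    have h4 : ‖(WithLp.equiv 2 (Fin n → ℝ)).symm (B *ᵥ x)‖ ^ 2
        ≤ (Real.sqrt (a * c) * ‖x'‖) ^ 2 := by
      rw [h1, mul_pow, Real.sq_sqrt (by positivity), h2]; linarith
    have h5 : 0 ≤ Real.sqrt (a * c) * ‖x'‖ := by positivity
    nlinarith [norm_nonneg ((WithLp.equiv 2 (Fin n → ℝ)).symm (B *ᵥ x)), h4, h5]
  have hB0 : 0 ≤ spec2Norm B := norm_nonneg _
  calc spec2Norm B ^ 2 ≤ Real.sqrt (a * c) ^ 2 := by nlinarith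
    _ = a * c := Real.sq_sqrt (by positivity)
end

section
/- Let W and Z be n×n real matrices and let K be the n²×n² diagonal 0–1 matrix with K_{(i,p),(i,p)} = 1 if i = p and all other entries 0. Then ρ( (W ⊗ W) · K · (Z ⊗ Z) · K ) = ρ( (W ∘ W) · (Z ∘ Z) ), i.e. the spectral radius of the n²×n² matrix on the left equals the spectral radius of the n×n product of the Hadamard squares. -/
open Matrix
open scoped Kronecker

/-- Membership in the spectrum of a complex matrix corresponds to being a root of
its characteristic polynomial. -/
lemma aux_mem_spectrum_iff {m : Type*} [Fintype m] [DecidableEq m]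
    (A : Matrix m m ℂ) (μ : ℂ) :
    μ ∈ spectrum ℂ A ↔ A.charpoly.eval μ = 0 := by
  rw [spectrum.mem_iff, Matrix.isUnit_iff_isUnit_det, isUnit_iff_ne_zero, not_not]
  have h : ((algebraMap ℂ (Matrix m m ℂ)) μ - A).det = A.charpoly.eval μ := by
    rw [Matrix.charpoly, ← Polynomial.coe_evalRingHom, RingHom.map_det]
    congr 1
    ext i j
    by_cases hij : i = j <;>
      simp [hij, Matrix.charmatrix_apply, Matrix.algebraMap_matrix_apply,
        Matrix.diagonal_apply]
  rw [h]

lemma aux_spectrum_eq_setOf {m : Type*} [Fintype m] [DecidableEq m]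
    (A : Matrix m m ℂ) :
    spectrum ℂ A = {μ | A.charpoly.eval μ = 0} :=
  Set.ext fun μ => aux_mem_spectrum_iff A μ

lemma aux_spectrum_finite {m : Type*} [Fintype m] [DecidableEq m]
    (A : Matrix m m ℂ) : (spectrum ℂ A).Finite := by
  rw [aux_spectrum_eq_setOf]
  exact Polynomial.finite_setOf_isRoot (A.charpoly_monic.ne_zero)

lemma aux_spectrum_nonempty_iff {m : Type*} [Fintype m] [DecidableEq m]
    (A : Matrix m m ℂ) : (spectrum ℂ A).Nonempty ↔ Nonempty m := by
  constructor
  · intro ⟨μ, hμ⟩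
    by_contra hne
    have : IsEmpty m := not_nonempty_iff.mp hne
    rw [aux_spectrum_eq_setOf] at hμ
    have : A.charpoly = 1 := by
      rw [Matrix.charpoly, Matrix.det_isEmpty]
    simp [this] at hμ
  · intro hm
    have hdeg : A.charpoly.degree ≠ 0 := by
      rw [Matrix.charpoly_degree_eq_dim]
      simp [Fintype.card_pos_iff.mpr hm, Fintype.card_ne_zero]
    obtain ⟨μ, hμ⟩ := IsAlgClosed.exists_root A.charpoly hdeg
    exact ⟨μ, (aux_mem_spectrum_iff A μ).mpr hμ⟩

lemma aux_sSup_abs_image_eq {S T : Set ℂ} (hS : S.Finite) (hT : T.Finite)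
    (h : S \ {0} = T \ {0}) (hne : S.Nonempty ↔ T.Nonempty) :
    sSup ((fun z : ℂ => ‖z‖) '' S) = sSup ((fun z : ℂ => ‖z‖) '' T) := by
  rcases Set.eq_empty_or_nonempty S with hSe | hSne
  · have hTe : T = ∅ := by
      by_contra hT'
      exact absurd (hne.mpr (Set.nonempty_iff_ne_empty.mpr hT')) (by simp [hSe])
    simp [hSe, hTe]
  · have hTne : T.Nonempty := hne.mp hSne
    have key : ∀ (U : Set ℂ), U.Finite → U.Nonempty →
        sSup ((fun z : ℂ => ‖z‖) '' U) = sSup ((fun z : ℂ => ‖z‖) '' (U ∪ {0})) := by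
      intro U hUf hUne
      have himg : (fun z : ℂ => ‖z‖) '' (U ∪ {0}) = ((fun z : ℂ => ‖z‖) '' U) ∪ {0} := by
        rw [Set.image_union]
        simp
      rw [himg, csSup_union ((hUf.image _).bddAbove) (hUne.image _)
        (Set.finite_singleton _).bddAbove (Set.singleton_nonempty _)]
      rw [csSup_singleton]
      refine (sup_eq_left.mpr ?_).symm
      obtain ⟨x, hx⟩ := hUne
      exact le_trans (norm_nonneg x)
        (le_csSup (hUf.image _).bddAbove ⟨x, hx, rfl⟩)
    have hU : S ∪ {0} = T ∪ {0} := by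
      rw [← Set.diff_union_self, h, Set.diff_union_self]
    rw [key S hS hSne, key T hT hTne, hU]

/-- The spectral radius of `(W⊗W)·K·(Z⊗Z)·K` equals the spectral radius of the
product `(W∘W)·(Z∘Z)` of the Hadamard squares. -/
theorem specRad_kronecker_kdiag_eq_specRad_hadamard
    (n : ℕ) (W Z : Matrix (Fin n) (Fin n) ℝ) :
    specRad ((W ⊗ₖ W) * kdiag (Fin n) * (Z ⊗ₖ Z) * kdiag (Fin n))
      = specRad ((W ⊙ W) * (Z ⊙ Z)) := by
  classical
  set Wc := W.map Complex.ofReal with hWc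
  set Zc := Z.map Complex.ofReal with hZc
  set Kc : Matrix (Fin n × Fin n) (Fin n × Fin n) ℂ :=
    Matrix.diagonal (fun ip => if ip.1 = ip.2 then 1 else 0) with hKc
  have hKmap : (kdiag (Fin n)).map Complex.ofReal = Kc := by
    rw [kdiag, hKc, Matrix.diagonal_map (by simp)]
    funext ip
    simp [apply_ite Complex.ofReal]
  have hKK : Kc * Kc = Kc := by
    rw [hKc, Matrix.diagonal_mul_diagonal]
    ext ip jq
    rcases eq_or_ne ip jq with h | h
    · subst h
      by_cases h2 : ip.1 = ip.2 <;> simp [Matrix.diagonal_apply, h2]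
    · simp [Matrix.diagonal_apply, h]
  have hkron : ∀ M : Matrix (Fin n) (Fin n) ℝ,
      (M ⊗ₖ M).map Complex.ofReal = (M.map Complex.ofReal) ⊗ₖ (M.map Complex.ofReal) := by
    intro M
    ext ⟨i, p⟩ ⟨j, q⟩
    simp [Matrix.kroneckerMap_apply]
  have hmapA : ((W ⊗ₖ W) * kdiag (Fin n) * (Z ⊗ₖ Z) * kdiag (Fin n)).map Complex.ofReal
      = (Wc ⊗ₖ Wc) * Kc * (Zc ⊗ₖ Zc) * Kc := by
    rw [show (Complex.ofReal : ℝ → ℂ) = ⇑Complex.ofRealHom from rfl]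
    rw [Matrix.map_mul, Matrix.map_mul, Matrix.map_mul]
    rw [show ⇑Complex.ofRealHom = (Complex.ofReal : ℝ → ℂ) from rfl]
    rw [hkron, hkron, hKmap, hWc, hZc]
  set Hc := (Wc ⊙ Wc) * (Zc ⊙ Zc) with hHc
  have hmapH : ((W ⊙ W) * (Z ⊙ Z)).map Complex.ofReal = Hc := by
    rw [show (Complex.ofReal : ℝ → ℂ) = ⇑Complex.ofRealHom from rfl, Matrix.map_mul]
    rw [hHc]
    congr 1 <;> · ext i j; simp [Matrix.hadamard_apply, hWc, hZc]
  set D := Kc * (Wc ⊗ₖ Wc) * Kc * (Zc ⊗ₖ Zc) * Kc with hD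
  have hchain : spectrum ℂ ((Wc ⊗ₖ Wc) * Kc * (Zc ⊗ₖ Zc) * Kc) \ {0}
      = spectrum ℂ D \ {0} := by
    have e1 : (Wc ⊗ₖ Wc) * Kc * (Zc ⊗ₖ Zc) * Kc
        = ((Wc ⊗ₖ Wc) * Kc) * ((Zc ⊗ₖ Zc) * Kc) := by
      rw [mul_assoc ((Wc ⊗ₖ Wc) * Kc)]
    have e2 : ((Zc ⊗ₖ Zc) * Kc) * ((Wc ⊗ₖ Wc) * Kc)
        = ((Zc ⊗ₖ Zc) * Kc) * (Kc * ((Wc ⊗ₖ Wc) * Kc)) := by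
      rw [← mul_assoc ((Zc ⊗ₖ Zc) * Kc) Kc, mul_assoc (Zc ⊗ₖ Zc) Kc Kc, hKK]
    have e3 : (Kc * ((Wc ⊗ₖ Wc) * Kc)) * ((Zc ⊗ₖ Zc) * Kc) = D := by
      rw [hD]
      noncomm_ring
    calc spectrum ℂ ((Wc ⊗ₖ Wc) * Kc * (Zc ⊗ₖ Zc) * Kc) \ {0}
        = spectrum ℂ (((Zc ⊗ₖ Zc) * Kc) * ((Wc ⊗ₖ Wc) * Kc)) \ {0} := by
          rw [e1]; exact spectrum.nonzero_mul_comm _ _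
      _ = spectrum ℂ (((Zc ⊗ₖ Zc) * Kc) * (Kc * ((Wc ⊗ₖ Wc) * Kc))) \ {0} := by rw [e2]
      _ = spectrum ℂ ((Kc * ((Wc ⊗ₖ Wc) * Kc)) * ((Zc ⊗ₖ Zc) * Kc)) \ {0} :=
          spectrum.nonzero_mul_comm _ _
      _ = spectrum ℂ D \ {0} := by rw [e3]
  have hDentry : ∀ i p j q : Fin n, D (i, p) (j, q)
      = (if i = p then 1 else 0) * (if j = q then 1 else 0) * Hc i j := by
    intro i p j q
    rw [hD, hKc, hHc]
    simp [Matrix.mul_apply, Matrix.diagonal_apply, Matrix.kroneckerMap_apply,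
      Fintype.sum_prod_type, Matrix.hadamard_apply, ite_mul, mul_ite,
      Finset.sum_ite_eq, Finset.sum_ite_eq']
    by_cases hi : i = p <;> by_cases hj : j = q <;> simp [hi, hj]
  -- reindex D into block form
  let g : Fin n ≃ {x : Fin n × Fin n // x.1 = x.2} :=
    { toFun := fun i => ⟨(i, i), rfl⟩
      invFun := fun x => x.1.1
      left_inv := fun i => rfl
      right_inv := by rintro ⟨⟨a, b⟩, h⟩; simp at h; subst h; rfl }
  let e : (Fin n ⊕ {x : Fin n × Fin n // ¬ x.1 = x.2}) ≃ (Fin n × Fin n) :=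
    (g.sumCongr (Equiv.refl _)).trans (Equiv.sumCompl fun x : Fin n × Fin n => x.1 = x.2)
  have hsub : D.submatrix e e = Matrix.fromBlocks Hc 0 0 0 := by
    ext x y
    rcases x with i | ⟨⟨a, b⟩, hab⟩ <;> rcases y with j | ⟨⟨a', b'⟩, hab'⟩
    · simp [e, g, Equiv.sumCompl, hDentry]
    · simp [e, g, Equiv.sumCompl, hDentry, hab']
    · simp [e, g, Equiv.sumCompl, hDentry, hab]
    · simp [e, g, Equiv.sumCompl, hDentry, hab, hab']
  have hcp : D.charpoly = Hc.charpoly *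
      (0 : Matrix {x : Fin n × Fin n // ¬ x.1 = x.2} {x : Fin n × Fin n // ¬ x.1 = x.2} ℂ).charpoly := by
    have hDeq : D = Matrix.reindex e e (Matrix.fromBlocks Hc 0 0 0) := by
      rw [Matrix.reindex_apply, ← hsub]
      ext x y
      simp [Matrix.submatrix_apply]
    rw [hDeq, Matrix.charpoly_reindex, Matrix.charpoly_fromBlocks_zero₁₂]
  have h0 : ∀ μ : ℂ, μ ≠ 0 →
      (0 : Matrix {x : Fin n × Fin n // ¬ x.1 = x.2} {x : Fin n × Fin n // ¬ x.1 = x.2} ℂ).charpoly.eval μ ≠ 0 := by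
    intro μ hμ hc
    have hmem : μ ∈ spectrum ℂ
        (0 : Matrix {x : Fin n × Fin n // ¬ x.1 = x.2} {x : Fin n × Fin n // ¬ x.1 = x.2} ℂ) :=
      (aux_mem_spectrum_iff _ _).mpr hc
    rw [spectrum.mem_iff, sub_zero] at hmem
    exact hmem ((isUnit_iff_ne_zero.mpr hμ).map (algebraMap ℂ _))
  have hDH : spectrum ℂ D \ {0} = spectrum ℂ Hc \ {0} := by
    ext μ
    simp only [Set.mem_diff, Set.mem_singleton_iff, aux_mem_spectrum_iff, hcp,
      Polynomial.eval_mul]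
    constructor
    · rintro ⟨h, hμ⟩
      refine ⟨?_, hμ⟩
      rcases mul_eq_zero.mp h with h | h
      · exact h
      · exact absurd h (h0 μ hμ)
    · rintro ⟨h, hμ⟩
      exact ⟨by rw [h, zero_mul], hμ⟩
  unfold specRad
  rw [hmapA, hmapH]
  apply aux_sSup_abs_image_eq (aux_spectrum_finite _) (aux_spectrum_finite _)
  · rw [hchain, hDH]
  · rw [aux_spectrum_nonempty_iff, aux_spectrum_nonempty_iff]
    exact ⟨fun ⟨x⟩ => ⟨x.1⟩, fun ⟨x⟩ => ⟨(x, x)⟩⟩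
end

section
/- Let A be an n×n real symmetric positive definite matrix with (unique) symmetric positive definite square root A^{1/2}, let P be an n×n_C real matrix of full column rank, set R := Pᵀ and A_C := R·A·P (which is symmetric positive definite, hence invertible), and set Π := P·A_C^{-1}·R. Then ‖ (A^{1/2}·Π)^{⊗2} · K · (A^{1/2})^{⊗2} ‖₂² = ρ( (Π ∘ Π)·(A ∘ A) ) ≤ ‖Π ∘ Π‖₂ · ‖A ∘ A‖₂, where K is the n²×n² diagonal 0–1 matrix with K_{(i,p),(i,p)} = 1 if i = p and all other entries 0. (This is the key estimate of the energy norm of the residual-fault covariance term C^{(ρ)} in the analysis of the Fault-Prone Two Grid Method.) -/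
open Matrix
open scoped Kronecker

/-! ### Auxiliary lemmas -/

open scoped Matrix.Norms.L2Operator ENNReal NNReal

section NormLemmas

lemma enorm_sq' {k : Type*} [Fintype k] (v : EuclideanSpace ℂ k) :
    ‖v‖ ^ 2 = (∑ j, (v j).re ^ 2) + ∑ j, (v j).im ^ 2 := by
  rw [EuclideanSpace.norm_eq, Real.sq_sqrt (by positivity), ← Finset.sum_add_distrib]
  congr 1; ext j
  rw [Complex.sq_norm, Complex.normSq_apply]; ring

lemma renorm_sq' {k : Type*} [Fintype k] (v : EuclideanSpace ℝ k) :
    ‖v‖ ^ 2 = ∑ j, (v j) ^ 2 := by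
  rw [EuclideanSpace.norm_eq, Real.sq_sqrt (by positivity)]
  simp [sq_abs]

lemma mulVec_map_re' {m k : Type*} [Fintype k] (M : Matrix m k ℝ) (v : k → ℂ) (i : m) :
    ((M.map Complex.ofReal *ᵥ v) i).re = (M *ᵥ fun j => (v j).re) i := by
  simp [mulVec, dotProduct, Complex.re_sum]

lemma mulVec_map_im' {m k : Type*} [Fintype k] (M : Matrix m k ℝ) (v : k → ℂ) (i : m) :
    ((M.map Complex.ofReal *ᵥ v) i).im = (M *ᵥ fun j => (v j).im) i := by
  simp [mulVec, dotProduct, Complex.im_sum]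

lemma l2norm_map_ofReal {m k : Type*} [Fintype m] [Fintype k] [DecidableEq k]
    (M : Matrix m k ℝ) : ‖M.map Complex.ofReal‖ = ‖M‖ := by
  apply le_antisymm
  · rw [l2_opNorm_def]
    refine ContinuousLinearMap.opNorm_le_bound _ (norm_nonneg M) fun v => ?_
    set x : EuclideanSpace ℝ k := (WithLp.equiv 2 (k → ℝ)).symm fun j => (v j).re with hx
    set y : EuclideanSpace ℝ k := (WithLp.equiv 2 (k → ℝ)).symm fun j => (v j).im with hy
    set Mx : EuclideanSpace ℝ m := (WithLp.equiv 2 (m → ℝ)).symm (M *ᵥ fun j => (v j).re) with hMx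
    set My : EuclideanSpace ℝ m := (WithLp.equiv 2 (m → ℝ)).symm (M *ᵥ fun j => (v j).im) with hMy
    have hTv : ‖(LinearMap.toContinuousLinearMap (toEuclideanLin (M.map Complex.ofReal))) v‖ ^ 2
        = ‖Mx‖ ^ 2 + ‖My‖ ^ 2 := by
      have : (LinearMap.toContinuousLinearMap (toEuclideanLin (M.map Complex.ofReal))) v
          = (WithLp.equiv 2 (m → ℂ)).symm ((M.map Complex.ofReal) *ᵥ (WithLp.equiv 2 (k → ℂ) v)) := rfl
      rw [this, enorm_sq', renorm_sq', renorm_sq']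
      simp only [hMx, hMy, WithLp.equiv_symm_apply, PiLp.toLp_apply]
      congr 1
      · exact Finset.sum_congr rfl fun i _ => by rw [mulVec_map_re']; rfl
      · exact Finset.sum_congr rfl fun i _ => by rw [mulVec_map_im']; rfl
    have hv : ‖v‖ ^ 2 = ‖x‖ ^ 2 + ‖y‖ ^ 2 := by
      rw [enorm_sq', renorm_sq', renorm_sq']; simp [hx, hy]
    have h1 : ‖Mx‖ ≤ ‖M‖ * ‖x‖ := by simpa [hMx, hx] using M.l2_opNorm_mulVec x
    have h2 : ‖My‖ ≤ ‖M‖ * ‖y‖ := by simpa [hMy, hy] using M.l2_opNorm_mulVec y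
    have hsq : ‖(LinearMap.toContinuousLinearMap (toEuclideanLin (M.map Complex.ofReal))) v‖ ^ 2
        ≤ (‖M‖ * ‖v‖) ^ 2 := by
      rw [hTv]
      calc ‖Mx‖ ^ 2 + ‖My‖ ^ 2 ≤ (‖M‖ * ‖x‖) ^ 2 + (‖M‖ * ‖y‖) ^ 2 :=
            add_le_add (pow_le_pow_left₀ (norm_nonneg _) h1 2)
              (pow_le_pow_left₀ (norm_nonneg _) h2 2)
        _ = (‖M‖ * ‖v‖) ^ 2 := by rw [mul_pow, mul_pow, mul_pow, ← mul_add, ← hv]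
    have := Real.sqrt_le_sqrt hsq
    rwa [Real.sqrt_sq (norm_nonneg _), Real.sqrt_sq (by positivity)] at this
  · rw [l2_opNorm_def (A := M)]
    refine ContinuousLinearMap.opNorm_le_bound _ (norm_nonneg _) fun x => ?_
    show ‖(LinearMap.toContinuousLinearMap (toEuclideanLin M)) x‖ ≤ _
    set v : EuclideanSpace ℂ k := (WithLp.equiv 2 (k → ℂ)).symm fun j => (x j : ℂ) with hv
    have h1 : ‖(LinearMap.toContinuousLinearMap (toEuclideanLin M)) x‖
        = ‖(WithLp.equiv 2 (m → ℂ)).symm ((M.map Complex.ofReal) *ᵥ (WithLp.equiv 2 (k → ℂ) v))‖ := by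
      have hTx : (LinearMap.toContinuousLinearMap (toEuclideanLin M)) x
          = (WithLp.equiv 2 (m → ℝ)).symm (M *ᵥ (WithLp.equiv 2 (k → ℝ) x)) := rfl
      have e1 : ‖(LinearMap.toContinuousLinearMap (toEuclideanLin M)) x‖ ^ 2
          = ‖(WithLp.equiv 2 (m → ℂ)).symm ((M.map Complex.ofReal) *ᵥ (WithLp.equiv 2 (k → ℂ) v))‖ ^ 2 := by
        rw [hTx, renorm_sq', enorm_sq']
        simp only [WithLp.equiv_symm_apply, PiLp.toLp_apply]
        have : ∀ i, ((M.map Complex.ofReal *ᵥ (WithLp.equiv 2 (k → ℂ) v)) i).re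
            = (M *ᵥ WithLp.equiv 2 (k → ℝ) x) i := fun i => by
          simp [hv, mulVec, dotProduct, Complex.re_sum]
        have him : ∀ i, ((M.map Complex.ofReal *ᵥ (WithLp.equiv 2 (k → ℂ) v)) i).im = 0 := fun i => by
          simp [hv, mulVec, dotProduct, Complex.im_sum]
        simp only [this, him]; simp
      have := congrArg Real.sqrt e1
      rwa [Real.sqrt_sq (norm_nonneg _), Real.sqrt_sq (norm_nonneg _)] at this
    have h2 : ‖v‖ = ‖x‖ := by
      have e1 : ‖v‖ ^ 2 = ‖x‖ ^ 2 := by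
        rw [enorm_sq', renorm_sq']; simp [hv]
      have := congrArg Real.sqrt e1
      rwa [Real.sqrt_sq (norm_nonneg _), Real.sqrt_sq (norm_nonneg _)] at this
    rw [h1]
    calc _ ≤ ‖M.map Complex.ofReal‖ * ‖v‖ := (M.map Complex.ofReal).l2_opNorm_mulVec v
      _ = _ := by rw [h2]

lemma spec2Norm_eq_l2norm {m k : Type*} [Fintype m] [Fintype k] [DecidableEq k]
    (M : Matrix m k ℝ) : spec2Norm M = ‖M‖ := rfl

end NormLemmas

section SpecLemmas

lemma sSup_abs_spectrum {A : Type*} [NormedRing A] [NormedAlgebra ℂ A] [CompleteSpace A] (a : A) :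
    sSup ((fun z : ℂ => ‖z‖) '' spectrum ℂ a) = (spectralRadius ℂ a).toReal := by
  rcases (spectrum ℂ a).eq_empty_or_nonempty with h | h
  · simp [h, spectralRadius, Real.sSup_empty]
  · obtain ⟨z0, hz0, hz0r⟩ := spectrum.exists_nnnorm_eq_spectralRadius_of_nonempty h
    have hub : ∀ z ∈ spectrum ℂ a, ‖z‖ ≤ ‖z0‖ := fun z hz => by
      have h1 : (‖z‖₊ : ℝ≥0∞) ≤ spectralRadius ℂ a := by
        rw [spectralRadius]
        exact le_iSup₂ (f := fun (k : ℂ) (_ : k ∈ spectrum ℂ a) => ((‖k‖₊ : ℝ≥0∞))) z hz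
      rw [← hz0r, ENNReal.coe_le_coe] at h1
      exact NNReal.coe_le_coe.mpr h1
    have hbdd : BddAbove ((fun z : ℂ => ‖z‖) '' spectrum ℂ a) := by
      refine ⟨‖z0‖, ?_⟩
      rintro x ⟨z, hz, rfl⟩; exact hub z hz
    have hsup : sSup ((fun z : ℂ => ‖z‖) '' spectrum ℂ a) = ‖z0‖ := by
      refine le_antisymm (csSup_le (h.image _) ?_) (le_csSup hbdd ⟨z0, hz0, rfl⟩)
      rintro x ⟨z, hz, rfl⟩; exact hub z hz
    rw [hsup, ← hz0r]
    simp

lemma bddAbove_abs_spectrum {k : Type*} [Fintype k] [DecidableEq k] (N : Matrix k k ℂ) :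
    BddAbove ((fun z : ℂ => ‖z‖) '' spectrum ℂ N) := by
  rw [← AlgEquiv.spectrum_eq (Matrix.toEuclideanCLM (𝕜 := ℂ)) N]
  exact ((spectrum.isCompact _).image continuous_norm).bddAbove

lemma specRad_symm_eq {k : Type*} [Fintype k] [DecidableEq k] (M : Matrix k k ℝ)
    (hM : Mᵀ = M) : specRad M = spec2Norm M := by
  set a := Matrix.toEuclideanCLM (𝕜 := ℂ) (M.map Complex.ofReal) with ha
  have hsa : IsSelfAdjoint a := by
    show star a = a
    rw [ha, ← map_star]
    congr 1
    rw [Matrix.star_eq_conjTranspose]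
    ext i j
    simp only [conjTranspose_apply, Matrix.map_apply, Complex.star_def, Complex.conj_ofReal]
    have : M j i = M i j := by conv_rhs => rw [← hM, transpose_apply]
    rw [this]
  have h1 : specRad M = sSup ((fun z : ℂ => ‖z‖) '' spectrum ℂ a) := by
    rw [specRad, ← AlgEquiv.spectrum_eq (Matrix.toEuclideanCLM (𝕜 := ℂ)) (M.map Complex.ofReal)]
  rw [h1, sSup_abs_spectrum, hsa.toReal_spectralRadius_complex_eq_norm, ha,
    ← Matrix.cstar_norm_def, l2norm_map_ofReal]
  rfl

lemma spec2Norm_sq_eq {m k : Type*} [Fintype m] [Fintype k] [DecidableEq k] [DecidableEq m]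
    (M : Matrix m k ℝ) : spec2Norm M ^ 2 = specRad (Mᵀ * M) := by
  have hsym : (Mᵀ * M)ᵀ = Mᵀ * M := by rw [transpose_mul, transpose_transpose]
  rw [specRad_symm_eq _ hsym]
  have : (Mᵀ * M : Matrix k k ℝ) = Mᴴ * M := by rw [conjTranspose_eq_transpose_of_trivial]
  show (‖M‖ : ℝ) ^ 2 = ‖Mᵀ * M‖
  rw [this, l2_opNorm_conjTranspose_mul_self, sq]

set_option synthInstance.maxHeartbeats 400000 in
set_option maxHeartbeats 1000000 in
lemma specRad_le_spec2Norm {k : Type*} [Fintype k] [DecidableEq k] (N : Matrix k k ℝ) :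
    specRad N ≤ spec2Norm N := by
  rcases (spectrum ℂ (N.map Complex.ofReal)).eq_empty_or_nonempty with h | h
  · rw [specRad, h]
    simpa [Real.sSup_empty, spec2Norm] using
      norm_nonneg (LinearMap.toContinuousLinearMap (toEuclideanLin N))
  · rcases isEmpty_or_nonempty k with hk | hk
    · exfalso
      obtain ⟨z, hz⟩ := h
      rw [spectrum.mem_iff] at hz
      exact hz (isUnit_of_subsingleton _)
    · haveI : Nontrivial (EuclideanSpace ℂ k) := by
        refine ⟨EuclideanSpace.single hk.some 1, 0, fun hcon => ?_⟩
        have := congrFun (congrArg (WithLp.equiv 2 (k → ℂ)) hcon) hk.some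
        simpa using this
      refine csSup_le (h.image _) ?_
      rintro x ⟨z, hz, rfl⟩
      rw [← AlgEquiv.spectrum_eq (Matrix.toEuclideanCLM (𝕜 := ℂ)) (N.map Complex.ofReal)] at hz
      have := spectrum.norm_le_norm_of_mem hz
      rw [← Matrix.cstar_norm_def, l2norm_map_ofReal] at this
      exact this

lemma mem_spectrum_iff_det {k : Type*} [Fintype k] [DecidableEq k] (N : Matrix k k ℂ) (z : ℂ) :
    z ∈ spectrum ℂ N ↔ det (z • (1 : Matrix k k ℂ) - N) = 0 := by
  rw [spectrum.mem_iff, Algebra.algebraMap_eq_smul_one]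
  rw [← not_iff_comm, Matrix.isUnit_iff_isUnit_det, isUnit_iff_ne_zero]

lemma det_smul_one_sub_mul {a b : Type*} [Fintype a] [Fintype b] [DecidableEq a] [DecidableEq b]
    (U : Matrix a b ℂ) (V : Matrix b a ℂ) {z : ℂ} (hz : z ≠ 0) :
    det (z • (1 : Matrix a a ℂ) - U * V) = z ^ (Fintype.card a) * det (1 + ((-z⁻¹) • U) * V) := by
  have h : z • (1 : Matrix a a ℂ) - U * V = z • (1 + ((-z⁻¹) • U) * V) := by
    rw [Matrix.smul_mul, smul_add, smul_smul, mul_neg, mul_inv_cancel₀ hz, neg_one_smul,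
      sub_eq_add_neg]
  rw [h, Matrix.det_smul, Fintype.card]

lemma spectrum_mul_swap {a b : Type*} [Fintype a] [Fintype b] [DecidableEq a] [DecidableEq b]
    (U : Matrix a b ℂ) (V : Matrix b a ℂ) :
    insert (0 : ℂ) (spectrum ℂ (U * V)) = insert 0 (spectrum ℂ (V * U)) := by
  ext z
  by_cases hz : z = 0
  · simp [hz]
  · simp only [Set.mem_insert_iff, hz, false_or]
    rw [mem_spectrum_iff_det, mem_spectrum_iff_det,
      det_smul_one_sub_mul U V hz, det_smul_one_sub_mul V U hz]
    have h2 : (1 : Matrix b b ℂ) + ((-z⁻¹) • V) * U = 1 + V * ((-z⁻¹) • U) := by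
      rw [Matrix.smul_mul, Matrix.mul_smul]
    rw [h2, ← Matrix.det_one_add_mul_comm]
    simp [hz]

lemma sSup_abs_insert_zero (s : Set ℂ) (hbdd : BddAbove ((fun z : ℂ => ‖z‖) '' s)) :
    sSup ((fun z : ℂ => ‖z‖) '' insert 0 s) = sSup ((fun z : ℂ => ‖z‖) '' s) := by
  rw [Set.image_insert_eq]; simp only [norm_zero]
  rcases s.eq_empty_or_nonempty with h | h
  · simp [h, Real.sSup_empty]
  · rw [csSup_insert hbdd (h.image _)]
    refine sup_eq_right.mpr ?_
    obtain ⟨z, hz⟩ := h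
    exact le_trans (norm_nonneg z) (le_csSup hbdd ⟨z, hz, rfl⟩)

lemma map_mul_ofReal {a b c : Type*} [Fintype b] (X : Matrix a b ℝ) (Y : Matrix b c ℝ) :
    (X * Y).map Complex.ofReal = X.map Complex.ofReal * Y.map Complex.ofReal :=
  Matrix.map_mul (L := X) (M := Y) (f := Complex.ofRealHom)

lemma specRad_mul_comm {a b : Type*} [Fintype a] [Fintype b] [DecidableEq a] [DecidableEq b]
    (X : Matrix a b ℝ) (Y : Matrix b a ℝ) : specRad (X * Y) = specRad (Y * X) := by
  rw [specRad, specRad, map_mul_ofReal, map_mul_ofReal,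
    ← sSup_abs_insert_zero _ (bddAbove_abs_spectrum _),
    spectrum_mul_swap,
    sSup_abs_insert_zero _ (bddAbove_abs_spectrum _)]

end SpecLemmas

section JmatLemmas

def Jmat (n : Type*) [DecidableEq n] : Matrix (n × n) n ℝ :=
  fun ip j => if ip.1 = j ∧ ip.2 = j then 1 else 0

lemma Jmat_mul_transpose {n : Type*} [Fintype n] [DecidableEq n] :
    Jmat n * (Jmat n)ᵀ = kdiag n := by
  ext ⟨i, p⟩ ⟨j, q⟩
  simp only [Matrix.mul_apply, Jmat, transpose_apply, kdiag, Matrix.diagonal_apply,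
    Prod.ext_iff, ite_and, mul_ite, ite_mul, one_mul, zero_mul, mul_one, mul_zero,
    Finset.sum_ite_eq, Finset.sum_ite_eq', Finset.mem_univ, if_true]
  by_cases h1 : i = p <;> by_cases h2 : i = j <;> by_cases h3 : p = q <;>
    simp_all <;> try (intro h; simp_all)

lemma transpose_Jmat_kron_Jmat {n : Type*} [Fintype n] [DecidableEq n]
    (B C : Matrix n n ℝ) : (Jmat n)ᵀ * (B ⊗ₖ C) * Jmat n = B ⊙ C := by
  ext j k
  simp only [Matrix.mul_apply, Jmat, transpose_apply, kroneckerMap_apply, hadamard_apply,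
    Fintype.sum_prod_type, ite_and, mul_ite, ite_mul, one_mul, zero_mul, mul_one, mul_zero,
    Finset.sum_ite_eq, Finset.sum_ite_eq', Finset.mem_univ, if_true, Finset.sum_ite_irrel,
    Finset.sum_const_zero]

end JmatLemmas

section PiLemmas

variable {n nC : ℕ}

lemma posDef_conj' {A : Matrix (Fin n) (Fin n) ℝ} (hA : A.PosDef)
    (P : Matrix (Fin n) (Fin nC) ℝ) (hP : Function.Injective P.mulVec) :
    (Pᵀ * A * P).PosDef := by
  constructor
  · rw [← conjTranspose_eq_transpose_of_trivial]
    exact isHermitian_conjTranspose_mul_mul P hA.1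
  · have h := hA.conjTranspose_mul_mul_same hP
    rw [conjTranspose_eq_transpose_of_trivial] at h
    exact h.2

lemma pi_facts {A : Matrix (Fin n) (Fin n) ℝ} (hA : A.PosDef)
    (P : Matrix (Fin n) (Fin nC) ℝ) (hP : Function.Injective P.mulVec)
    (Pi : Matrix (Fin n) (Fin n) ℝ) (hPi : Pi = P * (Pᵀ * A * P)⁻¹ * Pᵀ) :
    Piᵀ = Pi ∧ Pi * A * Pi = Pi := by
  set B := Pᵀ * A * P with hB
  have hBpd : B.PosDef := posDef_conj' hA P hP
  have hBunit : IsUnit B.det := hBpd.det_pos.ne'.isUnit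
  have hBsymm : Bᵀ = B := by
    have := hBpd.1
    rwa [Matrix.IsHermitian, conjTranspose_eq_transpose_of_trivial] at this
  constructor
  · rw [hPi]
    rw [Matrix.transpose_mul, Matrix.transpose_mul, Matrix.transpose_transpose,
      Matrix.transpose_nonsing_inv, hBsymm, Matrix.mul_assoc]
  · have key : Pi * A * Pi = P * (B⁻¹ * B * B⁻¹) * Pᵀ := by
      rw [hPi, hB]; simp only [Matrix.mul_assoc]
    rw [key, Matrix.nonsing_inv_mul B hBunit, Matrix.one_mul, hPi]

end PiLemmas

/-- Key estimate of the energy norm of the residual-fault covariance term `C^{(ρ)}`: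
with `S = A^{1/2}` the SPD square root of the SPD matrix `A`, `R = Pᵀ`,
`A_C = R·A·P` and `Π = P·A_C⁻¹·R`,
`‖(A^{1/2}Π)^{⊗2} K (A^{1/2})^{⊗2}‖₂² = ρ((Π∘Π)(A∘A)) ≤ ‖Π∘Π‖₂·‖A∘A‖₂`. -/
theorem energy_norm_residual_fault_term
    (n nC : ℕ)
    (A S : Matrix (Fin n) (Fin n) ℝ)
    (hA : A.PosDef) (hS : S.PosDef) (hSsq : S * S = A)
    (P : Matrix (Fin n) (Fin nC) ℝ)
    (hP : Function.Injective P.mulVec)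
    (Pi : Matrix (Fin n) (Fin n) ℝ)
    (hPi : Pi = P * (Pᵀ * A * P)⁻¹ * Pᵀ) :
    spec2Norm (((S * Pi) ⊗ₖ (S * Pi)) * kdiag (Fin n) * (S ⊗ₖ S)) ^ 2
        = specRad ((Pi ⊙ Pi) * (A ⊙ A)) ∧
      specRad ((Pi ⊙ Pi) * (A ⊙ A)) ≤ spec2Norm (Pi ⊙ Pi) * spec2Norm (A ⊙ A) := by
  obtain ⟨hPit, hPAP⟩ := pi_facts hA P hP Pi hPi
  have hSt : Sᵀ = S := by
    have := hS.1
    rwa [Matrix.IsHermitian, conjTranspose_eq_transpose_of_trivial] at this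
  set M := ((S * Pi) ⊗ₖ (S * Pi)) * kdiag (Fin n) * (S ⊗ₖ S) with hM
  have hKt : (kdiag (Fin n))ᵀ = kdiag (Fin n) := Matrix.diagonal_transpose _
  have hXt : ((S * Pi) ⊗ₖ (S * Pi))ᵀ = (Pi * S) ⊗ₖ (Pi * S) := by
    rw [← Matrix.kroneckerMap_transpose, Matrix.transpose_mul, hPit, hSt]
  have hSSt : (S ⊗ₖ S)ᵀ = S ⊗ₖ S := by
    rw [← Matrix.kroneckerMap_transpose, hSt]
  have hMt : Mᵀ = (S ⊗ₖ S) * (kdiag (Fin n) * ((Pi * S) ⊗ₖ (Pi * S))) := by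
    rw [hM, Matrix.transpose_mul, Matrix.transpose_mul, hKt, hXt, hSSt]
  have step1 : spec2Norm M ^ 2 = specRad (M * Mᵀ) := by
    rw [spec2Norm_sq_eq, specRad_mul_comm]
  have hMMt : M * Mᵀ = ((S * Pi) ⊗ₖ (S * Pi)) *
      (kdiag (Fin n) * ((A ⊗ₖ A) * (kdiag (Fin n) * ((Pi * S) ⊗ₖ (Pi * S))))) := by
    rw [hMt, hM]
    have hAA : (S ⊗ₖ S) * (S ⊗ₖ S) = A ⊗ₖ A := by
      rw [← Matrix.mul_kronecker_mul, hSsq]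
    simp only [Matrix.mul_assoc]
    rw [← Matrix.mul_assoc (S ⊗ₖ S) (S ⊗ₖ S), hAA]
  have step2 : specRad (M * Mᵀ) = specRad ((Pi ⊙ Pi) * (A ⊙ A)) := by
    rw [hMMt, specRad_mul_comm]
    have h3 : kdiag (Fin n) * ((A ⊗ₖ A) * (kdiag (Fin n) * ((Pi * S) ⊗ₖ (Pi * S))))
        * ((S * Pi) ⊗ₖ (S * Pi))
        = Jmat (Fin n) * ((A ⊙ A) * ((Jmat (Fin n))ᵀ * (Pi ⊗ₖ Pi))) := by
      have hPP : ((Pi * S) ⊗ₖ (Pi * S)) * ((S * Pi) ⊗ₖ (S * Pi)) = Pi ⊗ₖ Pi := by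
        rw [← Matrix.mul_kronecker_mul]
        have : Pi * S * (S * Pi) = Pi := by
          rw [← Matrix.mul_assoc, Matrix.mul_assoc Pi S S, hSsq, hPAP]
        rw [this]
      have hKAK : kdiag (Fin n) * ((A ⊗ₖ A) * kdiag (Fin n))
          = Jmat (Fin n) * ((A ⊙ A) * (Jmat (Fin n))ᵀ) := by
        rw [← transpose_Jmat_kron_Jmat A A, ← Jmat_mul_transpose]
        simp only [Matrix.mul_assoc]
      calc kdiag (Fin n) * ((A ⊗ₖ A) * (kdiag (Fin n) * ((Pi * S) ⊗ₖ (Pi * S))))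
            * ((S * Pi) ⊗ₖ (S * Pi))
          = kdiag (Fin n) * ((A ⊗ₖ A) * kdiag (Fin n)) * (Pi ⊗ₖ Pi) := by
            rw [← hPP]; simp only [Matrix.mul_assoc]
        _ = Jmat (Fin n) * ((A ⊙ A) * (Jmat (Fin n))ᵀ) * (Pi ⊗ₖ Pi) := by rw [hKAK]
        _ = Jmat (Fin n) * ((A ⊙ A) * ((Jmat (Fin n))ᵀ * (Pi ⊗ₖ Pi))) := by
            simp only [Matrix.mul_assoc]
    rw [h3, specRad_mul_comm]
    have h4 : (A ⊙ A) * ((Jmat (Fin n))ᵀ * (Pi ⊗ₖ Pi)) * Jmat (Fin n)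
        = (A ⊙ A) * (Pi ⊙ Pi) := by
      rw [← transpose_Jmat_kron_Jmat Pi Pi]
      simp only [Matrix.mul_assoc]
    rw [h4, specRad_mul_comm]
  refine ⟨step1.trans step2, ?_⟩
  calc specRad ((Pi ⊙ Pi) * (A ⊙ A)) ≤ spec2Norm ((Pi ⊙ Pi) * (A ⊙ A)) :=
        specRad_le_spec2Norm _
    _ ≤ spec2Norm (Pi ⊙ Pi) * spec2Norm (A ⊙ A) := by
        rw [spec2Norm_eq_l2norm, spec2Norm_eq_l2norm, spec2Norm_eq_l2norm]
        exact Matrix.l2_opNorm_mul _ _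
end

section
/- Let A be an n×n real symmetric positive definite matrix, let P be an n×n_C real matrix of full column rank, set R := Pᵀ and A_C := R·A·P, and set Π := P·A_C^{-1}·R (a symmetric matrix). Then ‖Π ∘ Π‖₂ ≤ max_{i=1,…,n} ‖Π e^{(i)}‖₂² ≤ ‖Π·A‖₂² · max_{i=1,…,n} ‖A^{-1} e^{(i)}‖₂², where e^{(i)} are the canonical unit basis vectors of ℝ^n. -/
open Matrix

lemma euclNorm_eq {n : Type*} [Fintype n] (v : n → ℝ) :
    euclNorm v = ‖(WithLp.equiv 2 (n → ℝ)).symm v‖ := by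
  rw [EuclideanSpace.norm_eq, euclNorm]
  simp [sq_abs]

lemma euclNorm_nonneg {n : Type*} [Fintype n] (v : n → ℝ) : 0 ≤ euclNorm v :=
  Real.sqrt_nonneg _

lemma sq_euclNorm {n : Type*} [Fintype n] (v : n → ℝ) :
    euclNorm v ^ 2 = ∑ j, (v j) ^ 2 :=
  Real.sq_sqrt (by positivity)

lemma euclNorm_mulVec_le {m n : Type*} [Fintype m] [Fintype n] [DecidableEq n]
    (M : Matrix m n ℝ) (x : n → ℝ) :
    euclNorm (M.mulVec x) ≤ spec2Norm M * euclNorm x := by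
  rw [euclNorm_eq, euclNorm_eq]
  exact (LinearMap.toContinuousLinearMap (Matrix.toEuclideanLin M)).le_opNorm
    ((WithLp.equiv 2 (n → ℝ)).symm x)

lemma spec2Norm_le {m n : Type*} [Fintype m] [Fintype n] [DecidableEq n]
    (M : Matrix m n ℝ) (C : ℝ) (hC : 0 ≤ C)
    (h : ∀ x : n → ℝ, euclNorm (M.mulVec x) ≤ C * euclNorm x) :
    spec2Norm M ≤ C := by
  apply ContinuousLinearMap.opNorm_le_bound _ hC
  intro x
  have := h (WithLp.equiv 2 (n → ℝ) x)
  rw [euclNorm_eq, euclNorm_eq] at this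
  simpa [Matrix.toEuclideanLin_apply] using this

/-- With `A` SPD, `P` of full column rank, `R = Pᵀ`, `A_C = R·A·P` and
`Π = P·A_C⁻¹·R`,
`‖Π∘Π‖₂ ≤ max_i ‖Π e^{(i)}‖₂² ≤ ‖Π·A‖₂² · max_i ‖A⁻¹ e^{(i)}‖₂²`. -/
theorem hadamard_square_coarse_projection_bound
    (n nC : ℕ)
    (A : Matrix (Fin n) (Fin n) ℝ) (hA : A.PosDef)
    (P : Matrix (Fin n) (Fin nC) ℝ)
    (hP : Function.Injective P.mulVec)
    (Proj : Matrix (Fin n) (Fin n) ℝ)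
    (hProj : Proj = P * (Pᵀ * A * P)⁻¹ * Pᵀ) :
    spec2Norm (Proj ⊙ Proj) ≤ (⨆ i : Fin n, euclNorm (Proj.mulVec (Pi.single i 1)) ^ 2) ∧
      (⨆ i : Fin n, euclNorm (Proj.mulVec (Pi.single i 1)) ^ 2)
        ≤ spec2Norm (Proj * A) ^ 2 *
            (⨆ i : Fin n, euclNorm (A⁻¹.mulVec (Pi.single i 1)) ^ 2) := by
  have hAT : Aᵀ = A := by simpa [Matrix.IsHermitian] using hA.1
  have hsym : ∀ i j, Proj i j = Proj j i := by
    have hT : Projᵀ = Proj := by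
      rw [hProj]
      simp only [Matrix.transpose_mul, Matrix.transpose_transpose,
        Matrix.transpose_nonsing_inv]
      rw [hAT, ← Matrix.mul_assoc Pᵀ A P, ← Matrix.mul_assoc P]
    intro i j
    exact (congrFun (congrFun hT i) j).symm
  set S := ⨆ i : Fin n, euclNorm (Proj.mulVec (Pi.single i 1)) ^ 2 with hS
  have hKsq : ∀ i, euclNorm (Proj.mulVec (Pi.single i 1)) ^ 2 = ∑ j, Proj j i ^ 2 := by
    intro i
    rw [sq_euclNorm]
    congr 1; ext j
    simp [Matrix.mulVec, dotProduct, Pi.single_apply]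
  have hS0 : 0 ≤ S := Real.iSup_nonneg fun i => sq_nonneg _
  have hcol : ∀ j, (∑ m, Proj m j ^ 2) ≤ S := by
    intro j
    rw [← hKsq j]
    exact le_ciSup (f := fun m => euclNorm (Proj.mulVec (Pi.single m 1)) ^ 2)
      (Set.Finite.bddAbove (Set.finite_range _)) j
  have hrow : ∀ i, (∑ j, Proj i j ^ 2) ≤ S := by
    intro i
    have : (∑ j, Proj i j ^ 2) = ∑ j, Proj j i ^ 2 := by
      congr 1; ext j; rw [hsym i j]
    rw [this]; exact hcol i
  constructor
  · apply spec2Norm_le _ _ hS0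
    intro x
    have hx0 : (0:ℝ) ≤ ∑ j, x j ^ 2 := by positivity
    have key : ∑ i, ((Proj ⊙ Proj).mulVec x i) ^ 2 ≤ S ^ 2 * ∑ j, x j ^ 2 := by
      have happ : ∀ i, (Proj ⊙ Proj).mulVec x i = ∑ j, Proj i j ^ 2 * x j := by
        intro i
        simp [Matrix.mulVec, dotProduct, Matrix.hadamard_apply, sq, mul_assoc]
      calc ∑ i, ((Proj ⊙ Proj).mulVec x i) ^ 2
          = ∑ i, (∑ j, Proj i j ^ 2 * x j) ^ 2 := by simp only [happ]
        _ ≤ ∑ i, (∑ j, Proj i j ^ 2) * (∑ j, Proj i j ^ 2 * x j ^ 2) := by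
            apply Finset.sum_le_sum
            intro i _
            calc (∑ j, Proj i j ^ 2 * x j) ^ 2
                = (∑ j, Proj i j * (Proj i j * x j)) ^ 2 := by
                  congr 1; apply Finset.sum_congr rfl; intro j _; ring
              _ ≤ (∑ j, Proj i j ^ 2) * (∑ j, (Proj i j * x j) ^ 2) := by
                  simpa [sq] using Finset.sum_mul_sq_le_sq_mul_sq Finset.univ
                    (fun j => Proj i j) (fun j => Proj i j * x j)
              _ = (∑ j, Proj i j ^ 2) * (∑ j, Proj i j ^ 2 * x j ^ 2) := by
                  congr 1; apply Finset.sum_congr rfl; intro j _; ring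
        _ ≤ ∑ i, S * (∑ j, Proj i j ^ 2 * x j ^ 2) := by
            apply Finset.sum_le_sum
            intro i _
            exact mul_le_mul_of_nonneg_right (hrow i) (by positivity)
        _ = S * ∑ j, (∑ m, Proj m j ^ 2) * x j ^ 2 := by
            rw [← Finset.mul_sum, Finset.sum_comm]
            congr 1
            apply Finset.sum_congr rfl; intro j _
            rw [Finset.sum_mul]
        _ ≤ S * ∑ j, S * x j ^ 2 := by
            apply mul_le_mul_of_nonneg_left _ hS0
            apply Finset.sum_le_sum
            intro j _
            exact mul_le_mul_of_nonneg_right (hcol j) (sq_nonneg _)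
        _ = S ^ 2 * ∑ j, x j ^ 2 := by rw [← Finset.mul_sum]; ring
    calc euclNorm ((Proj ⊙ Proj).mulVec x)
        = Real.sqrt (∑ i, ((Proj ⊙ Proj).mulVec x i) ^ 2) := rfl
      _ ≤ Real.sqrt (S ^ 2 * ∑ j, x j ^ 2) := Real.sqrt_le_sqrt key
      _ = S * euclNorm x := by
          rw [Real.sqrt_mul (sq_nonneg _), Real.sqrt_sq hS0]; rfl
  · have hdet : IsUnit A.det := isUnit_iff_ne_zero.mpr hA.det_pos.ne'
    have hinv : Proj * A * A⁻¹ = Proj := Matrix.mul_nonsing_inv_cancel_right _ _ hdet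
    cases isEmpty_or_nonempty (Fin n) with
    | inl h =>
        simp [hS, Real.iSup_of_isEmpty]
    | inr h =>
        apply ciSup_le
        intro i
        have heq : Proj.mulVec (Pi.single i 1)
            = (Proj * A).mulVec (A⁻¹.mulVec (Pi.single i 1)) := by
          rw [Matrix.mulVec_mulVec, hinv]
        have h1 : euclNorm (Proj.mulVec (Pi.single i 1))
            ≤ spec2Norm (Proj * A) * euclNorm (A⁻¹.mulVec (Pi.single i 1)) := by
          rw [heq]; exact euclNorm_mulVec_le _ _
        calc euclNorm (Proj.mulVec (Pi.single i 1)) ^ 2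
            ≤ (spec2Norm (Proj * A) * euclNorm (A⁻¹.mulVec (Pi.single i 1))) ^ 2 := by
              apply pow_le_pow_left₀ (euclNorm_nonneg _) h1
          _ = spec2Norm (Proj * A) ^ 2 * euclNorm (A⁻¹.mulVec (Pi.single i 1)) ^ 2 := by ring
          _ ≤ spec2Norm (Proj * A) ^ 2 *
              (⨆ j : Fin n, euclNorm (A⁻¹.mulVec (Pi.single j 1)) ^ 2) := by
              apply mul_le_mul_of_nonneg_left _ (sq_nonneg _)
              exact le_ciSup (f := fun m => euclNorm (A⁻¹.mulVec (Pi.single m 1)) ^ 2)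
                (Set.Finite.bddAbove (Set.finite_range _)) i
end

section
/- Let A be an n×n real matrix, A_C an invertible n_C×n_C real matrix, P an n×n_C real matrix, R an n_C×n real matrix. Let X_P (n×n), X_R (n_C×n_C) and X_ρ (n×n) be mutually independent integrable random diagonal matrices with E[X_P] = e_P·I_n, E[X_R] = e_R·I_{n_C}, E[X_ρ] = e_ρ·I_n for scalars e_P, e_R, e_ρ. Then E[ I − X_P·P·A_C^{-1}·X_R·R·X_ρ·A ] = E^{CG} + (1 − e_P·e_R·e_ρ)·( I − E^{CG} ), where E^{CG} := I − P·A_C^{-1}·R·A is the iteration matrix of the fault-free exact coarse grid correction. -/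
open MeasureTheory Matrix

/-- Expectation of the iteration matrix of the exact fault-prone coarse grid
correction: for mutually independent integrable random diagonal matrices
`X_P = diag(dP)`, `X_R = diag(dR)`, `X_ρ = diag(dρ)` with `E[X_P] = e_P·I`,
`E[X_R] = e_R·I`, `E[X_ρ] = e_ρ·I`,
`E[I − X_P·P·A_C⁻¹·X_R·R·X_ρ·A] = E^{CG} + (1 − e_P e_R e_ρ)(I − E^{CG})`,
where `E^{CG} = I − P·A_C⁻¹·R·A`. -/
theorem expectation_faultprone_coarse_grid_correction
    {Ω : Type*} [MeasurableSpace Ω] (μ : Measure Ω) [IsProbabilityMeasure μ]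
    (n nC : ℕ)
    (A : Matrix (Fin n) (Fin n) ℝ)
    (AC : Matrix (Fin nC) (Fin nC) ℝ) (hAC : IsUnit AC.det)
    (P : Matrix (Fin n) (Fin nC) ℝ) (R : Matrix (Fin nC) (Fin n) ℝ)
    (dP dρ : Ω → Fin n → ℝ) (dR : Ω → Fin nC → ℝ)
    (hmP : Measurable dP) (hmR : Measurable dR) (hmρ : Measurable dρ)
    (hintP : ∀ i, Integrable (fun ω => dP ω i) μ)
    (hintR : ∀ i, Integrable (fun ω => dR ω i) μ)
    (hintρ : ∀ i, Integrable (fun ω => dρ ω i) μ)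
    -- mutual independence of the triple (X_P, X_R, X_ρ)
    (hPR : ProbabilityTheory.IndepFun dP dR μ)
    (hPRρ : ProbabilityTheory.IndepFun (fun ω => (dP ω, dR ω)) dρ μ)
    (eP eR eρ : ℝ)
    (hEP : matExp μ (fun ω => Matrix.diagonal (dP ω)) = eP • (1 : Matrix (Fin n) (Fin n) ℝ))
    (hER : matExp μ (fun ω => Matrix.diagonal (dR ω)) = eR • (1 : Matrix (Fin nC) (Fin nC) ℝ))
    (hEρ : matExp μ (fun ω => Matrix.diagonal (dρ ω)) = eρ • (1 : Matrix (Fin n) (Fin n) ℝ)) :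
    matExp μ (fun ω =>
        1 - Matrix.diagonal (dP ω) * P * AC⁻¹ * Matrix.diagonal (dR ω) * R *
              Matrix.diagonal (dρ ω) * A)
      = (1 - P * AC⁻¹ * R * A)
          + (1 - eP * eR * eρ) • (1 - (1 - P * AC⁻¹ * R * A)) := by
  classical
  have hP' : ∀ i, ∫ ω, dP ω i ∂μ = eP := by
    intro i
    have := congrFun (congrFun (congrArg (fun M => M) hEP) i) i
    simpa [matExp, Matrix.smul_apply, Matrix.one_apply] using this
  have hR' : ∀ k, ∫ ω, dR ω k ∂μ = eR := by
    intro k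
    have := congrFun (congrFun (congrArg (fun M => M) hER) k) k
    simpa [matExp, Matrix.smul_apply, Matrix.one_apply] using this
  have hρ' : ∀ l, ∫ ω, dρ ω l ∂μ = eρ := by
    intro l
    have := congrFun (congrFun (congrArg (fun M => M) hEρ) l) l
    simpa [matExp, Matrix.smul_apply, Matrix.one_apply] using this
  -- independence of the individual entries
  have hind1 : ∀ (i : Fin n) (k : Fin nC),
      ProbabilityTheory.IndepFun (fun ω => dP ω i) (fun ω => dR ω k) μ :=
    fun i k => hPR.comp (measurable_pi_apply i) (measurable_pi_apply k)
  have hind2 : ∀ (i : Fin n) (k : Fin nC) (l : Fin n),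
      ProbabilityTheory.IndepFun (fun ω => dP ω i * dR ω k) (fun ω => dρ ω l) μ := by
    intro i k l
    exact hPRρ.comp
      ((measurable_pi_apply i).comp measurable_fst |>.mul
        ((measurable_pi_apply k).comp measurable_snd)) (measurable_pi_apply l)
  have hint2 : ∀ (i : Fin n) (k : Fin nC),
      Integrable (fun ω => dP ω i * dR ω k) μ :=
    fun i k => (hind1 i k).integrable_mul (hintP i) (hintR k)
  have hint3 : ∀ (i : Fin n) (k : Fin nC) (l : Fin n),
      Integrable (fun ω => dP ω i * dR ω k * dρ ω l) μ :=
    fun i k l => (hind2 i k l).integrable_mul (hint2 i k) (hintρ l)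
  have hval : ∀ (i : Fin n) (k : Fin nC) (l : Fin n),
      ∫ ω, dP ω i * dR ω k * dρ ω l ∂μ = eP * eR * eρ := by
    intro i k l
    have h2 : (∫ ω, dP ω i * dR ω k * dρ ω l ∂μ)
        = (∫ ω, dP ω i * dR ω k ∂μ) * ∫ ω, dρ ω l ∂μ :=
      (hind2 i k l).integral_mul_eq_mul_integral (hint2 i k).aestronglyMeasurable
        (hintρ l).aestronglyMeasurable
    have h1 : (∫ ω, dP ω i * dR ω k ∂μ) = (∫ ω, dP ω i ∂μ) * ∫ ω, dR ω k ∂μ :=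
      (hind1 i k).integral_mul_eq_mul_integral (hintP i).aestronglyMeasurable
        (hintR k).aestronglyMeasurable
    rw [h2, h1, hP' i, hR' k, hρ' l]
  -- entrywise computation
  ext i j
  have hentry : ∀ ω, (Matrix.diagonal (dP ω) * P * AC⁻¹ * Matrix.diagonal (dR ω) * R *
        Matrix.diagonal (dρ ω) * A) i j
      = ∑ l : Fin n, ∑ k : Fin nC,
          dP ω i * dR ω k * dρ ω l * ((P * AC⁻¹) i k * R k l * A l j) := by
    intro ω
    simp only [Matrix.mul_apply, Matrix.diagonal_apply, Finset.sum_ite_eq,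
      Finset.sum_ite_eq', Finset.mem_univ, if_true, ite_mul, mul_ite, zero_mul, mul_zero,
      Finset.sum_mul, Finset.mul_sum]
    refine Finset.sum_congr rfl fun l _ => Finset.sum_congr rfl fun k _ =>
      Finset.sum_congr rfl fun m _ => ?_
    ring
  have hintsum : Integrable (fun ω => ∑ l : Fin n, ∑ k : Fin nC,
      dP ω i * dR ω k * dρ ω l * ((P * AC⁻¹) i k * R k l * A l j)) μ := by
    apply integrable_finset_sum _ fun l _ => integrable_finset_sum _ fun k _ => ?_
    exact (hint3 i k l).mul_const _
  simp only [matExp, Matrix.of_apply, Matrix.sub_apply, Matrix.add_apply, Matrix.smul_apply,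
    smul_eq_mul]
  rw [integral_sub (integrable_const _) (by simpa only [hentry] using hintsum)]
  rw [integral_const]
  simp only [measure_univ, probReal_univ, ENNReal.toReal_one, one_smul]
  have : ∫ ω, (Matrix.diagonal (dP ω) * P * AC⁻¹ * Matrix.diagonal (dR ω) * R *
        Matrix.diagonal (dρ ω) * A) i j ∂μ
      = eP * eR * eρ * ((P * AC⁻¹ * R * A) i j) := by
    simp only [hentry]
    rw [integral_finset_sum _ fun l _ => integrable_finset_sum _ fun k _ =>
      (hint3 i k l).mul_const _]
    have : ∀ l : Fin n, ∫ ω, ∑ k : Fin nC,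
        dP ω i * dR ω k * dρ ω l * ((P * AC⁻¹) i k * R k l * A l j) ∂μ
        = ∑ k : Fin nC, eP * eR * eρ * ((P * AC⁻¹) i k * R k l * A l j) := by
      intro l
      rw [integral_finset_sum _ fun k _ => (hint3 i k l).mul_const _]
      refine Finset.sum_congr rfl fun k _ => ?_
      rw [integral_mul_const, hval i k l]
    simp only [this]
    simp only [Matrix.mul_apply, Finset.mul_sum, Finset.sum_mul]
  rw [this]
  ring
end
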